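/- arXiv:math/0402216 — 3 statements merged into one kernel-verified Lean document; each statement's English description precedes it below -/
import Mathlib

section
/- Let τ, κ be involutions in Σ_N with characteristic partition {H₁,…,H_t} (the finest partition of {1,…,N} into blocks invariant under both τ and κ). Then exactly one of the following holds: (i) there exists σ ∈ Σ_N commuting with both τ and κ such that S(σ,τ)·S(σ,κ) = −1; (ii) there exists an involution λ ∈ Σ_N with λ(H_i) = H_i for all i and λτλ⁻¹ = κ. -/
open Equiv Finset

def Ssign {N : ℕ} (σ τ : Equiv.Perm (Fin N)) : ℤ :=
  (-1) ^ (Finset.univ.filter (fun p : Fin N × Fin N =>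
      p.1 < p.2 ∧ τ p.1 = p.2 ∧ σ p.2 < σ p.1)).card


/-- H is invariant under a permutation π. -/
def InvSet {N : ℕ} (π : Equiv.Perm (Fin N)) (H : Finset (Fin N)) : Prop :=
  ∀ a ∈ H, π a ∈ H

/-- H is a block of the characteristic partition of (τ,κ): a minimal nonempty
subset of {1,…,N} invariant under both τ and κ. -/
def IsCharBlock {N : ℕ} (τ κ : Equiv.Perm (Fin N)) (H : Finset (Fin N)) : Prop :=
  H.Nonempty ∧ InvSet τ H ∧ InvSet κ H ∧
    ∀ K ⊆ H, K.Nonempty → InvSet τ K → InvSet κ K → K = H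

set_option linter.unusedSectionVars false

attribute [local instance] Classical.propDecidable


namespace Dich

variable {N : ℕ}

def osgn (a b : Fin N) : ℤ := if a < b then 1 else -1

section grp
variable (τ κ : Perm (Fin N))

def rho : Perm (Fin N) := τ * κ

def inOrb (x y : Fin N) : Prop :=
  ∃ k : ℤ, y = (rho τ κ ^ k) x ∨ y = (rho τ κ ^ k) (τ x)

noncomputable def orb (x : Fin N) : Finset (Fin N) :=
  Finset.univ.filter (fun y => inOrb τ κ x y)

variable {τ κ}

lemma invol_apply {π : Perm (Fin N)} (h : π * π = 1) (z : Fin N) : π (π z) = z := by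
  have : (π * π) z = (1 : Perm (Fin N)) z := by rw [h]
  simpa using this

variable (hτ : τ * τ = 1) (hκ : κ * κ = 1)

include hτ hκ

lemma tau_rho_zpow (k : ℤ) : τ * (rho τ κ) ^ k * τ = (rho τ κ) ^ (-k) := by
  have hτi : τ⁻¹ = τ := by rw [inv_eq_iff_mul_eq_one, hτ]
  have hκi : κ⁻¹ = κ := by rw [inv_eq_iff_mul_eq_one, hκ]
  have h2 : MulAut.conj τ (rho τ κ) = (rho τ κ)⁻¹ := by
    simp only [MulAut.conj_apply, hτi, rho]
    rw [show τ * (τ * κ) * τ = (τ * τ) * (κ * τ) by group, hτ, one_mul,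
      mul_inv_rev, hτi, hκi]
  have h3 := map_zpow (MulAut.conj τ) (rho τ κ) k
  rw [h2] at h3
  have h4 : τ * (rho τ κ) ^ k * τ⁻¹ = (rho τ κ)^(-k) := by
    simpa [MulAut.conj_apply, inv_zpow, zpow_neg] using h3
  rwa [hτi] at h4

lemma tau_rho_apply (k : ℤ) (z : Fin N) :
    τ (((rho τ κ) ^ k) z) = ((rho τ κ) ^ (-k)) (τ z) := by
  conv_rhs => rw [← tau_rho_zpow hτ hκ k]
  simp [Perm.mul_apply, invol_apply hτ]

lemma kappa_eq_tau_rho : κ = τ * rho τ κ := by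
  rw [rho, ← mul_assoc, hτ, one_mul]

lemma kappa_rho_apply (k : ℤ) (z : Fin N) :
    κ (((rho τ κ) ^ k) z) = ((rho τ κ) ^ (-(k+1))) (τ z) := by
  have hk1 : ∀ w, κ w = τ ((rho τ κ) w) := by
    intro w
    rw [rho]
    simp [Perm.mul_apply, invol_apply hτ]
  rw [hk1]
  rw [← Perm.mul_apply (rho τ κ) ((rho τ κ)^k), ← zpow_one_add,
    show (1+k) = k+1 by ring, tau_rho_apply hτ hκ]

end grp

section orbits
variable {τ κ : Perm (Fin N)} (hτ : τ * τ = 1) (hκ : κ * κ = 1)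

lemma zpow_add_apply (g : Perm (Fin N)) (a b : ℤ) (z : Fin N) :
    (g ^ (a + b)) z = (g ^ a) ((g ^ b) z) := by
  rw [zpow_add]; rfl

include hτ hκ

lemma inOrb_refl (x : Fin N) : inOrb τ κ x x := ⟨0, Or.inl (by simp)⟩

lemma inOrb_tau {x y : Fin N} (h : inOrb τ κ x y) : inOrb τ κ x (τ y) := by
  obtain ⟨k, h | h⟩ := h
  · exact ⟨-k, Or.inr (by rw [h, tau_rho_apply hτ hκ])⟩
  · exact ⟨-k, Or.inl (by rw [h, tau_rho_apply hτ hκ, invol_apply hτ])⟩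

lemma inOrb_kappa {x y : Fin N} (h : inOrb τ κ x y) : inOrb τ κ x (κ y) := by
  obtain ⟨k, h | h⟩ := h
  · exact ⟨-(k+1), Or.inr (by rw [h, kappa_rho_apply hτ hκ])⟩
  · exact ⟨-(k+1), Or.inl (by rw [h, kappa_rho_apply hτ hκ, invol_apply hτ])⟩

lemma inOrb_rho {x y : Fin N} (k : ℤ) (h : inOrb τ κ x y) :
    inOrb τ κ x (((rho τ κ) ^ k) y) := by
  obtain ⟨j, h | h⟩ := h
  · exact ⟨k + j, Or.inl (by rw [h, zpow_add_apply])⟩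
  · exact ⟨k + j, Or.inr (by rw [h, zpow_add_apply])⟩

lemma inOrb_symm {x y : Fin N} (h : inOrb τ κ x y) : inOrb τ κ y x := by
  obtain ⟨k, h | h⟩ := h
  · refine ⟨-k, Or.inl ?_⟩
    rw [h, ← zpow_add_apply]; simp
  · refine ⟨k, Or.inr ?_⟩
    have : τ y = ((rho τ κ) ^ (-k)) x := by
      rw [h, tau_rho_apply hτ hκ, invol_apply hτ]
    rw [this, ← zpow_add_apply]; simp

lemma inOrb_trans {x y z : Fin N} (h1 : inOrb τ κ x y) (h2 : inOrb τ κ y z) :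
    inOrb τ κ x z := by
  obtain ⟨k, h2 | h2⟩ := h2
  · rw [h2]; exact inOrb_rho hτ hκ k h1
  · rw [h2]; exact inOrb_rho hτ hκ k (inOrb_tau hτ hκ h1)

omit hτ hκ

lemma mem_orb {x y : Fin N} : y ∈ orb τ κ x ↔ inOrb τ κ x y := by
  simp [orb]

include hτ hκ

lemma self_mem_orb (x : Fin N) : x ∈ orb τ κ x := mem_orb.2 (inOrb_refl hτ hκ x)

lemma orb_eq {x y : Fin N} (h : inOrb τ κ x y) : orb τ κ x = orb τ κ y := by
  ext z
  simp only [mem_orb]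
  exact ⟨fun hz => inOrb_trans hτ hκ (inOrb_symm hτ hκ h) hz,
    fun hz => inOrb_trans hτ hκ h hz⟩

omit hτ hκ

lemma invSet_inv_mem {π : Perm (Fin N)} {K : Finset (Fin N)} (h : InvSet π K)
    {z : Fin N} (hz : z ∈ K) : π⁻¹ z ∈ K := by
  have himg : K.image π = K := by
    apply Finset.eq_of_subset_of_card_le
    · intro w hw
      obtain ⟨u, hu, rfl⟩ := Finset.mem_image.1 hw
      exact h u hu
    · rw [Finset.card_image_of_injective _ π.injective]
  rw [← himg] at hz
  obtain ⟨u, hu, huz⟩ := Finset.mem_image.1 hz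
  have : π⁻¹ z = u := by rw [← huz]; simp
  rwa [this]

lemma invSet_zpow {K : Finset (Fin N)} (h1 : InvSet τ K) (h2 : InvSet κ K)
    {z : Fin N} (hz : z ∈ K) (k : ℤ) : ((rho τ κ) ^ k) z ∈ K := by
  induction k using Int.induction_on with
  | zero => simpa using hz
  | succ n ih =>
    have : ((rho τ κ) ^ ((n : ℤ) + 1)) z = (rho τ κ) (((rho τ κ) ^ (n:ℤ)) z) := by
      rw [add_comm, zpow_add_apply, zpow_one]
    rw [this]
    exact h1 _ (h2 _ ih)
  | pred n ih =>
    have : ((rho τ κ) ^ (-(n : ℤ) - 1)) z = (rho τ κ)⁻¹ (((rho τ κ) ^ (-(n:ℤ))) z) := by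
      rw [sub_eq_add_neg, add_comm, zpow_add_apply, zpow_neg_one]
    rw [this, rho, mul_inv_rev]
    exact invSet_inv_mem h2 (invSet_inv_mem h1 ih)

include hτ hκ

lemma charBlock_orb (x : Fin N) : IsCharBlock τ κ (orb τ κ x) := by
  refine ⟨⟨x, self_mem_orb hτ hκ x⟩, ?_, ?_, ?_⟩
  · intro a ha; exact mem_orb.2 (inOrb_tau hτ hκ (mem_orb.1 ha))
  · intro a ha; exact mem_orb.2 (inOrb_kappa hτ hκ (mem_orb.1 ha))
  · intro K hK hKne hKτ hKκ
    obtain ⟨y, hy⟩ := hKne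
    have hxy : inOrb τ κ x y := mem_orb.1 (hK hy)
    apply Finset.Subset.antisymm hK
    intro z hz
    have hyz : inOrb τ κ y z := inOrb_trans hτ hκ (inOrb_symm hτ hκ hxy) (mem_orb.1 hz)
    obtain ⟨k, h | h⟩ := hyz
    · rw [h]; exact invSet_zpow hKτ hKκ hy k
    · rw [h]; exact invSet_zpow hKτ hKκ (hKτ y hy) k

lemma block_eq_orb {B : Finset (Fin N)} (hB : IsCharBlock τ κ B) {x : Fin N}
    (hx : x ∈ B) : B = orb τ κ x := by
  obtain ⟨hne, hBτ, hBκ, hmin⟩ := hB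
  have horb : orb τ κ x ⊆ B := by
    intro z hz
    obtain ⟨k, h | h⟩ := mem_orb.1 hz
    · rw [h]; exact invSet_zpow hBτ hBκ hx k
    · rw [h]; exact invSet_zpow hBτ hBκ (hBτ x hx) k
  exact (hmin _ horb ⟨x, self_mem_orb hτ hκ x⟩
    (fun a ha => mem_orb.2 (inOrb_tau hτ hκ (mem_orb.1 ha)))
    (fun a ha => mem_orb.2 (inOrb_kappa hτ hκ (mem_orb.1 ha)))).symm

end orbits

section period

lemma per_ex (g : Perm (Fin N)) (x : Fin N) : ∃ n, 0 < n ∧ (g ^ n) x = x :=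
  ⟨orderOf g, orderOf_pos g, by rw [pow_orderOf_eq_one]; simp⟩

noncomputable def per (g : Perm (Fin N)) (x : Fin N) : ℕ := Nat.find (per_ex g x)

lemma per_pos (g : Perm (Fin N)) (x : Fin N) : 0 < per g x := (Nat.find_spec (per_ex g x)).1

lemma per_spec (g : Perm (Fin N)) (x : Fin N) : (g ^ (per g x : ℤ)) x = x := by
  have := (Nat.find_spec (per_ex g x)).2
  rw [zpow_natCast]; exact this

lemma per_min (g : Perm (Fin N)) (x : Fin N) {m : ℕ} (hm : 0 < m) (hmlt : m < per g x) :
    (g ^ m) x ≠ x := fun h => Nat.find_min (per_ex g x) hmlt ⟨hm, h⟩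

lemma per_zpow_mul (g : Perm (Fin N)) (x : Fin N) (q : ℤ) :
    (g ^ ((per g x : ℤ) * q)) x = x := by
  induction q using Int.induction_on with
  | zero => simp
  | succ n ih =>
    rw [mul_add, mul_one, zpow_add_apply, per_spec, ih]
  | pred n ih =>
    rw [mul_sub, mul_one, sub_eq_add_neg, add_comm, zpow_add_apply, ih]
    have h2 := congrArg (fun w => (g ^ (-(per g x:ℤ))) w) (per_spec g x)
    simp only [← zpow_add_apply] at h2
    simpa using h2.symm

lemma per_dvd_iff (g : Perm (Fin N)) (x : Fin N) (k : ℤ) :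
    (g ^ k) x = x ↔ ((per g x : ℤ)) ∣ k := by
  constructor
  · intro h
    have hd0 : (0:ℤ) < (per g x : ℤ) := by exact_mod_cast per_pos g x
    obtain ⟨q, hq⟩ := Int.dvd_self_sub_of_emod_eq (rfl : k % (per g x : ℤ) = k % (per g x : ℤ))
    have hk : k = (per g x : ℤ) * q + k % (per g x : ℤ) := by omega
    have hr : (g ^ (k % (per g x : ℤ))) x = x := by
      have he : -((per g x : ℤ)*q) + k = k % (per g x : ℤ) := by omega
      have h2 : (g ^ (k % (per g x : ℤ))) x
          = (g ^ (-((per g x : ℤ)*q))) ((g ^ k) x) := by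
        rw [← zpow_add_apply, he]
      rw [h, show -((per g x : ℤ)*q) = (per g x : ℤ) * (-q) by ring] at h2
      rw [h2, per_zpow_mul]
    have hge : 0 ≤ k % (per g x : ℤ) := Int.emod_nonneg k (ne_of_gt hd0)
    have hlt : k % (per g x : ℤ) < (per g x : ℤ) := Int.emod_lt_of_pos k hd0
    by_contra hnd
    have hne : k % (per g x : ℤ) ≠ 0 := fun h0 => hnd (Int.dvd_of_emod_eq_zero h0)
    set m := (k % (per g x : ℤ)).toNat with hm
    have hm0 : 0 < m := by omega
    have hmlt : m < per g x := by omega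
    apply per_min g x hm0 hmlt
    have hcast : ((m : ℤ)) = k % (per g x : ℤ) := by omega
    rw [← zpow_natCast, hcast]
    exact hr
  · rintro ⟨q, rfl⟩
    exact per_zpow_mul g x q

lemma per_congr (g : Perm (Fin N)) (x : Fin N) (a b : ℤ) :
    (g ^ a) x = (g ^ b) x ↔ ((per g x : ℤ)) ∣ a - b := by
  rw [← per_dvd_iff]
  constructor
  · intro h
    have := congrArg (fun w => (g ^ (-b)) w) h
    simp only [← zpow_add_apply] at this
    rw [show -b + a = a - b by ring, show -b + b = (0:ℤ) by ring] at this
    simpa using this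
  · intro h
    have := congrArg (fun w => (g ^ b) w) h
    simp only [← zpow_add_apply] at this
    rw [show b + (a - b) = a by ring] at this
    simpa using this

end period

section bridge

variable {τ : Perm (Fin N)}

def wfac (σ τ : Perm (Fin N)) (a : Fin N) : ℤ :=
  if a < τ a ∧ σ (τ a) < σ a then -1 else 1

lemma osgn_sq (a b : Fin N) : osgn a b * osgn a b = 1 := by
  unfold osgn; split_ifs <;> norm_num

lemma wfac_pair (σ : Perm (Fin N)) {a b : Fin N} (hab : a ≠ b) (hτab : τ a = b)
    (hτba : τ b = a) : wfac σ τ a * wfac σ τ b = osgn a b * osgn (σ a) (σ b) := by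
  have hσ : σ a ≠ σ b := fun h => hab (σ.injective h)
  rcases lt_or_gt_of_ne hab with h | h
  · have hw2 : wfac σ τ b = 1 := by
      unfold wfac; rw [hτba, if_neg]; rintro ⟨h', -⟩; exact lt_asymm h h'
    rcases lt_or_gt_of_ne hσ with h2 | h2
    · have hw1 : wfac σ τ a = 1 := by
        unfold wfac; rw [hτab, if_neg]; rintro ⟨-, h'⟩; exact lt_asymm h2 h'
      rw [hw1, hw2]; unfold osgn; rw [if_pos h, if_pos h2]
    · have hw1 : wfac σ τ a = -1 := by
        unfold wfac; rw [hτab, if_pos ⟨h, h2⟩]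
      rw [hw1, hw2]; unfold osgn
      rw [if_pos h, if_neg (lt_asymm h2)]; norm_num
  · have hw1 : wfac σ τ a = 1 := by
      unfold wfac; rw [hτab, if_neg]; rintro ⟨h', -⟩; exact lt_asymm h h'
    rcases lt_or_gt_of_ne hσ with h2 | h2
    · have hw2 : wfac σ τ b = -1 := by
        unfold wfac; rw [hτba, if_pos ⟨h, h2⟩]
      rw [hw1, hw2]; unfold osgn
      rw [if_neg (lt_asymm h), if_pos h2]; norm_num
    · have hw2 : wfac σ τ b = 1 := by
        unfold wfac; rw [hτba, if_neg]; rintro ⟨-, h'⟩; exact lt_asymm h2 h'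
      rw [hw1, hw2]; unfold osgn
      rw [if_neg (lt_asymm h), if_neg (lt_asymm h2)]; norm_num

lemma wfac_fix (σ : Perm (Fin N)) {a : Fin N} (ha : τ a = a) : wfac σ τ a = 1 := by
  unfold wfac
  rw [ha]
  simp

lemma prod_eq_of_split (f g : Fin N → ℤ) (s : Finset (Fin N))
    (hfg : ∀ x ∉ s, f x = g x) (E : ℤ)
    (hE : (∏ x ∈ s, f x) = E * ∏ x ∈ s, g x) :
    (∏ x : Fin N, f x) = E * ∏ x : Fin N, g x := by
  rw [← Finset.prod_mul_prod_compl s f, ← Finset.prod_mul_prod_compl s g, hE]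
  have hc : (∏ x ∈ sᶜ, f x) = ∏ x ∈ sᶜ, g x :=
    Finset.prod_congr rfl (fun x hx => hfg x (by simpa using hx))
  rw [hc]; ring

lemma fix_iff {σ : Perm (Fin N)} (hc : Commute σ τ) :
    ∀ a, τ a = a ↔ τ (σ a) = σ a := by
  intro a
  constructor
  · intro h
    have : τ (σ a) = σ (τ a) := by
      have := hc.symm
      rw [Commute, SemiconjBy] at this
      calc τ (σ a) = (τ * σ) a := rfl
        _ = (σ * τ) a := by rw [this]
        _ = σ (τ a) := rfl
    rw [this, h]
  · intro h
    have h2 : τ (σ a) = σ (τ a) := by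
      have := hc.symm
      rw [Commute, SemiconjBy] at this
      calc τ (σ a) = (τ * σ) a := rfl
        _ = (σ * τ) a := by rw [this]
        _ = σ (τ a) := rfl
    rw [h2] at h
    exact σ.injective h

lemma commute_apply {σ π : Perm (Fin N)} (hc : Commute σ π) (a : Fin N) :
    σ (π a) = π (σ a) := by
  calc σ (π a) = (σ * π) a := rfl
    _ = (π * σ) a := by rw [hc]
    _ = π (σ a) := rfl

/-- disjoint swaps commute -/
lemma swap_commute {a c b d : Fin N} (h1 : a ≠ b) (h2 : a ≠ d) (h3 : c ≠ b) (h4 : c ≠ d) :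
    Commute (Equiv.swap a c) (Equiv.swap b d) := by
  rw [Commute, SemiconjBy]
  ext x
  simp only [Perm.mul_apply, Equiv.swap_apply_def]
  split_ifs <;> simp_all

lemma fix_iff' {σ : Perm (Fin N)} (hc : Commute σ τ) :
    ∀ a, (fun w => τ w = w) (σ a) ↔ (fun w => τ w = w) a := fun a => (fix_iff hc a).symm

lemma swap_commute_invol {a b : Fin N} (hτ : τ * τ = 1) (hb : τ a = b) :
    Commute (Equiv.swap a b) τ := by
  have h := Equiv.swap_apply_apply τ a b
  rw [hb, show τ b = a from by rw [← hb, invol_apply hτ]] at h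
  rw [Equiv.swap_comm] at h
  rw [Commute, SemiconjBy]
  have hτi : τ⁻¹ = τ := by rw [inv_eq_iff_mul_eq_one, hτ]
  rw [hτi] at h
  calc Equiv.swap a b * τ = (τ * Equiv.swap a b * τ) * τ := by rw [← h]
    _ = τ * Equiv.swap a b * (τ * τ) := by group
    _ = τ * Equiv.swap a b := by rw [hτ]; group

end bridge

section bridgemain

variable {τ : Perm (Fin N)}

lemma osgn_swap {a b : Fin N} (hab : a ≠ b) : osgn b a = - osgn a b := by
  unfold osgn
  rcases lt_or_gt_of_ne hab with h | h
  · rw [if_neg (lt_asymm h), if_pos h]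
  · rw [if_pos h, if_neg (lt_asymm h)]; norm_num

lemma bridge_base (hτ : τ * τ = 1) (σ : Perm (Fin N)) (hc : Commute σ τ)
    (hfix : ∀ x, τ x ≠ x → σ x = x) :
    (∏ a : Fin N, wfac σ τ a)
      = (Perm.sign σ : ℤ) * (Perm.sign (σ.subtypePerm (p := fun w => τ w = w) (fix_iff' hc)) : ℤ) := by
  have hL : (∏ a : Fin N, wfac σ τ a) = 1 := by
    apply Finset.prod_eq_one
    intro x _
    by_cases hx : τ x = x
    · exact wfac_fix σ hx
    · unfold wfac
      rw [if_neg]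
      rintro ⟨hlt, hσ⟩
      have h1 : σ x = x := hfix x hx
      have h2 : σ (τ x) = τ x := by
        apply hfix
        rw [invol_apply hτ]
        exact fun h => hx h.symm
      rw [h1, h2] at hσ
      exact lt_asymm hlt hσ
  have hR : Perm.sign (σ.subtypePerm (p := fun w => τ w = w) (fix_iff' hc)) = Perm.sign σ := by
    apply Perm.sign_subtypePerm
    intro x hx
    by_contra h
    exact hx (hfix x h)
  rw [hL, hR]
  have h3 : (Perm.sign σ) * (Perm.sign σ) = 1 := Int.units_mul_self _
  calc (1 : ℤ) = ((1 : ℤˣ) : ℤ) := rfl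
    _ = ((Perm.sign σ * Perm.sign σ : ℤˣ) : ℤ) := by rw [h3]
    _ = (Perm.sign σ : ℤ) * (Perm.sign σ : ℤ) := by push_cast; ring

lemma bridge_aux (hτ : τ * τ = 1) (n : ℕ) :
    ∀ (σ : Perm (Fin N)) (hc : Commute σ τ),
      (Finset.univ.filter fun x => σ x ≠ x ∧ τ x ≠ x).card ≤ n →
      (∏ a : Fin N, wfac σ τ a)
        = (Perm.sign σ : ℤ) * (Perm.sign (σ.subtypePerm (p := fun w => τ w = w) (fix_iff' hc)) : ℤ) := by
  induction n with
  | zero =>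
    intro σ hc hcard
    apply bridge_base hτ σ hc
    intro x hx
    by_contra hσx
    have hxmem : x ∈ Finset.univ.filter fun x => σ x ≠ x ∧ τ x ≠ x := by
      simp only [Finset.mem_filter, Finset.mem_univ, true_and]
      exact ⟨hσx, hx⟩
    have := Finset.card_pos.2 ⟨x, hxmem⟩
    omega
  | succ n ih =>
    intro σ hc hcard
    by_cases hempty : ∀ x, τ x ≠ x → σ x = x
    · exact bridge_base hτ σ hc hempty
    push_neg at hempty
    obtain ⟨a, ha2, ha1⟩ := hempty
    have haS : a ∈ Finset.univ.filter fun x => σ x ≠ x ∧ τ x ≠ x := by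
      simp only [Finset.mem_filter, Finset.mem_univ, true_and]
      exact ⟨ha1, ha2⟩
    set b := τ a with hb
    have hba : τ b = a := invol_apply hτ a
    have hab : a ≠ b := fun h => ha2 (by rw [hb] at h; exact h.symm)
    have hσb : σ b = τ (σ a) := by rw [hb, commute_apply hc]
    by_cases hcase : σ a = b
    · -- case 1 : σ swaps the edge {a,b}
      have hσba : σ b = a := by rw [hσb, hcase, hba]
      have htcom : Commute (Equiv.swap a b) τ := swap_commute_invol hτ hb.symm
      set σ' := σ * Equiv.swap a b with hσ'
      have hc' : Commute σ' τ := Commute.mul_left hc htcom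
      have hσ'a : σ' a = a := by
        rw [hσ', Perm.mul_apply, Equiv.swap_apply_left, hσba]
      have hσ'b : σ' b = b := by
        rw [hσ', Perm.mul_apply, Equiv.swap_apply_right, hcase]
      have hσ'x : ∀ x, x ≠ a → x ≠ b → σ' x = σ x := by
        intro x h1x h2x
        rw [hσ', Perm.mul_apply, Equiv.swap_apply_of_ne_of_ne h1x h2x]
      have hsub : (Finset.univ.filter fun x => σ' x ≠ x ∧ τ x ≠ x)
          ⊂ (Finset.univ.filter fun x => σ x ≠ x ∧ τ x ≠ x) := by
        constructor
        · intro x hx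
          simp only [Finset.mem_filter, Finset.mem_univ, true_and] at hx ⊢
          obtain ⟨hx1, hx2⟩ := hx
          have hxa : x ≠ a := fun h => hx1 (by rw [h, hσ'a])
          have hxb : x ≠ b := fun h => hx1 (by rw [h, hσ'b])
          exact ⟨by rw [← hσ'x x hxa hxb]; exact hx1, hx2⟩
        · intro hsup
          have := hsup haS
          simp only [Finset.mem_filter, Finset.mem_univ, true_and] at this
          exact this.1 hσ'a
      have hcard' : (Finset.univ.filter fun x => σ' x ≠ x ∧ τ x ≠ x).card ≤ n := by
        have := Finset.card_lt_card hsub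
        omega
      have ihσ' := ih σ' hc' hcard'
      have hsplit : (∏ x : Fin N, wfac σ' τ x) = (-1) * ∏ x : Fin N, wfac σ τ x := by
        apply prod_eq_of_split _ _ ({a, b} : Finset (Fin N))
        · intro x hx
          simp only [Finset.mem_insert, Finset.mem_singleton] at hx
          push_neg at hx
          have hτxa : τ x ≠ a := fun h => hx.2 (by rw [← hba] at h; exact τ.injective h)
          have hτxb : τ x ≠ b := fun h => hx.1 (by rw [hb] at h; exact τ.injective h)
          unfold wfac
          simp only [hσ'x x hx.1 hx.2, hσ'x (τ x) hτxa hτxb]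
        · rw [Finset.prod_pair hab, Finset.prod_pair hab]
          calc wfac σ' τ a * wfac σ' τ b
              = osgn a b * osgn a b := by
                rw [wfac_pair σ' hab hb.symm hba, hσ'a, hσ'b]
            _ = -1 * (osgn a b * osgn b a) := by rw [osgn_swap hab]; ring
            _ = -1 * (wfac σ τ a * wfac σ τ b) := by
                rw [wfac_pair σ hab hb.symm hba, hcase, hσba]
      have hsign : (Perm.sign σ' : ℤ) = -(Perm.sign σ : ℤ) := by
        rw [hσ', Perm.sign_mul, Perm.sign_swap hab]
        push_cast
        ring
      have hsubeq : Perm.sign (σ'.subtypePerm (p := fun w => τ w = w) (fix_iff' hc'))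
          = Perm.sign (σ.subtypePerm (p := fun w => τ w = w) (fix_iff' hc)) := by
        congr 1
        apply Equiv.ext
        intro x
        apply Subtype.ext
        simp only [Perm.subtypePerm_apply]
        apply hσ'x
        · intro h
          apply ha2
          rw [hb, ← h]
          exact x.prop
        · intro h
          have hx : τ (x : Fin N) = x := x.prop
          rw [h, hba] at hx
          exact hab hx
      rw [hsplit, hsign, hsubeq] at ihσ'
      linarith [ihσ']
    · -- case 2 : σ moves the edge {a,b} to a different edge
      set c := σ⁻¹ a with hc1
      set d := σ⁻¹ b with hd1
      have hσc : σ c = a := Equiv.apply_symm_apply σ a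
      have hσd : σ d = b := Equiv.apply_symm_apply σ b
      have hτc : τ c = d := by
        rw [hc1, hd1, ← commute_apply (hc.inv_left) a, hb]
      have hτd : τ d = c := by rw [← hτc, invol_apply hτ]
      have hca : c ≠ a := fun h => ha1 (h ▸ hσc)
      have hcb : c ≠ b := by
        intro h
        apply hcase
        have h4 : σ b = a := by rw [← h]; exact hσc
        have h2 : τ (σ a) = a := by rw [← hσb, h4]
        have h3 := congrArg τ h2
        rw [invol_apply hτ] at h3
        rw [h3, hb]
      have hda : d ≠ a := fun h => hcase (h ▸ hσd)
      have hdb : d ≠ b := by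
        intro h
        apply ha1
        have h4 : σ b = b := by nth_rewrite 1 [← h]; exact hσd
        have h2 : τ (σ a) = τ a := by rw [← hσb, h4, hb]
        exact τ.injective h2
      have hcd : c ≠ d := fun h => hab (by rw [← hσc, h]; exact hσd)
      -- the correcting permutation
      have hswap1 : τ * Equiv.swap a c * τ = Equiv.swap b d := by
        have h := Equiv.swap_apply_apply τ a c
        have hτi : τ⁻¹ = τ := by rw [inv_eq_iff_mul_eq_one, hτ]
        rw [hτi, ← hb, hτc] at h
        exact h.symm
      have hswap2 : τ * Equiv.swap b d * τ = Equiv.swap a c := by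
        have h := Equiv.swap_apply_apply τ b d
        have hτi : τ⁻¹ = τ := by rw [inv_eq_iff_mul_eq_one, hτ]
        rw [hτi, hba, hτd] at h
        exact h.symm
      set t := Equiv.swap a c * Equiv.swap b d with ht
      have hdisj : Commute (Equiv.swap b d) (Equiv.swap a c) :=
        swap_commute (Ne.symm hab) (Ne.symm hcb) hda (Ne.symm hcd)
      have hkey : τ * t * τ = t := by
        calc τ * t * τ = (τ * Equiv.swap a c * τ) * (τ * Equiv.swap b d * τ) := by
              rw [ht]
              have : (τ * Equiv.swap a c * τ) * (τ * Equiv.swap b d * τ)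
                  = τ * Equiv.swap a c * (τ * τ) * Equiv.swap b d * τ := by group
              rw [this, hτ]
              group
          _ = Equiv.swap b d * Equiv.swap a c := by rw [hswap1, hswap2]
          _ = t := by rw [ht, hdisj]
      have htcom : Commute t τ := by
        have h2 := congrArg (fun g => τ * g) hkey
        rw [show τ * (τ * t * τ) = (τ * τ) * (t * τ) from by group, hτ, one_mul] at h2
        exact h2
      set σ' := σ * t with hσ'
      have hc' : Commute σ' τ := Commute.mul_left hc htcom
      have htA : t a = c := by
        have h1 : Equiv.swap b d a = a := Equiv.swap_apply_of_ne_of_ne hab hda.symm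
        have h2 : Equiv.swap a c a = c := Equiv.swap_apply_left a c
        rw [ht, Perm.mul_apply, h1, h2]
      have htB : t b = d := by
        have h1 : Equiv.swap b d b = d := Equiv.swap_apply_left b d
        have h2 : Equiv.swap a c d = d := Equiv.swap_apply_of_ne_of_ne hda hcd.symm
        rw [ht, Perm.mul_apply, h1, h2]
      have htC : t c = a := by
        have h1 : Equiv.swap b d c = c := Equiv.swap_apply_of_ne_of_ne hcb hcd
        have h2 : Equiv.swap a c c = a := Equiv.swap_apply_right a c
        rw [ht, Perm.mul_apply, h1, h2]
      have htD : t d = b := by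
        have h1 : Equiv.swap b d d = b := Equiv.swap_apply_right b d
        have h2 : Equiv.swap a c b = b := Equiv.swap_apply_of_ne_of_ne hab.symm hcb.symm
        rw [ht, Perm.mul_apply, h1, h2]
      have htX : ∀ x, x ≠ a → x ≠ b → x ≠ c → x ≠ d → t x = x := by
        intro x h1 h2 h3 h4
        have e1 : Equiv.swap b d x = x := Equiv.swap_apply_of_ne_of_ne h2 h4
        have e2 : Equiv.swap a c x = x := Equiv.swap_apply_of_ne_of_ne h1 h3
        rw [ht, Perm.mul_apply, e1, e2]
      have hσ'a : σ' a = a := by rw [hσ', Perm.mul_apply, htA, hσc]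
      have hσ'b : σ' b = b := by rw [hσ', Perm.mul_apply, htB, hσd]
      have hσ'c : σ' c = σ a := by rw [hσ', Perm.mul_apply, htC]
      have hσ'd : σ' d = σ b := by rw [hσ', Perm.mul_apply, htD]
      have hσ'x : ∀ x, x ≠ a → x ≠ b → x ≠ c → x ≠ d → σ' x = σ x := by
        intro x h1 h2 h3 h4
        rw [hσ', Perm.mul_apply, htX x h1 h2 h3 h4]
      have hsub : (Finset.univ.filter fun x => σ' x ≠ x ∧ τ x ≠ x)
          ⊂ (Finset.univ.filter fun x => σ x ≠ x ∧ τ x ≠ x) := by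
        constructor
        · intro x hx
          simp only [Finset.mem_filter, Finset.mem_univ, true_and] at hx ⊢
          obtain ⟨hx1, hx2⟩ := hx
          refine ⟨?_, hx2⟩
          by_cases h3 : x = c
          · rw [h3, hσc]; exact Ne.symm hca
          by_cases h4 : x = d
          · rw [h4, hσd]; exact Ne.symm hdb
          have h1 : x ≠ a := fun h => hx1 (by rw [h, hσ'a])
          have h2 : x ≠ b := fun h => hx1 (by rw [h, hσ'b])
          rw [← hσ'x x h1 h2 h3 h4]
          exact hx1
        · intro hsup
          have := hsup haS
          simp only [Finset.mem_filter, Finset.mem_univ, true_and] at this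
          exact this.1 hσ'a
      have hcard' : (Finset.univ.filter fun x => σ' x ≠ x ∧ τ x ≠ x).card ≤ n := by
        have := Finset.card_lt_card hsub
        omega
      have ihσ' := ih σ' hc' hcard'
      have habcd : a ∉ ({b, c, d} : Finset (Fin N)) := by
        simp only [Finset.mem_insert, Finset.mem_singleton]
        push_neg
        exact ⟨hab, Ne.symm hca, Ne.symm hda⟩
      have hbcd : b ∉ ({c, d} : Finset (Fin N)) := by
        simp only [Finset.mem_insert, Finset.mem_singleton]
        push_neg
        exact ⟨Ne.symm hcb, Ne.symm hdb⟩
      have hcdm : c ∉ ({d} : Finset (Fin N)) := by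
        simp only [Finset.mem_singleton]
        exact hcd
      have hexpand : ∀ f : Fin N → ℤ,
          (∏ x ∈ ({a, b, c, d} : Finset (Fin N)), f x) = f a * (f b * (f c * f d)) := by
        intro f
        rw [show ({a, b, c, d} : Finset (Fin N))
            = insert a (insert b (insert c ({d} : Finset (Fin N)))) from rfl]
        rw [Finset.prod_insert habcd, Finset.prod_insert hbcd,
          Finset.prod_insert hcdm, Finset.prod_singleton]
      have hsplit : (∏ x : Fin N, wfac σ' τ x) = 1 * ∏ x : Fin N, wfac σ τ x := by
        apply prod_eq_of_split _ _ ({a, b, c, d} : Finset (Fin N))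
        · intro x hx
          simp only [Finset.mem_insert, Finset.mem_singleton] at hx
          push_neg at hx
          obtain ⟨h1, h2, h3, h4⟩ := hx
          have hτ1 : τ x ≠ a := fun h => h2 (by rw [← hba] at h; exact τ.injective h)
          have hτ2 : τ x ≠ b := fun h => h1 (by rw [hb] at h; exact τ.injective h)
          have hτ3 : τ x ≠ c := fun h => h4 (by rw [← hτd] at h; exact τ.injective h)
          have hτ4 : τ x ≠ d := fun h => h3 (by rw [← hτc] at h; exact τ.injective h)
          unfold wfac
          simp only [hσ'x x h1 h2 h3 h4, hσ'x (τ x) hτ1 hτ2 hτ3 hτ4]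
        · rw [hexpand, hexpand]
          have E1 : wfac σ' τ a * wfac σ' τ b = osgn a b * osgn a b := by
            rw [wfac_pair σ' hab hb.symm hba, hσ'a, hσ'b]
          have E2 : wfac σ' τ c * wfac σ' τ d = osgn c d * osgn (σ a) (σ b) := by
            rw [wfac_pair σ' hcd hτc hτd, hσ'c, hσ'd]
          have E3 : wfac σ τ a * wfac σ τ b = osgn a b * osgn (σ a) (σ b) :=
            wfac_pair σ hab hb.symm hba
          have E4 : wfac σ τ c * wfac σ τ d = osgn c d * osgn a b := by
            rw [wfac_pair σ hcd hτc hτd, hσc, hσd]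
          calc wfac σ' τ a * (wfac σ' τ b * (wfac σ' τ c * wfac σ' τ d))
              = (wfac σ' τ a * wfac σ' τ b) * (wfac σ' τ c * wfac σ' τ d) := by ring
            _ = (osgn a b * osgn a b) * (osgn c d * osgn (σ a) (σ b)) := by rw [E1, E2]
            _ = (osgn a b * osgn (σ a) (σ b)) * (osgn c d * osgn a b) := by ring
            _ = (wfac σ τ a * wfac σ τ b) * (wfac σ τ c * wfac σ τ d) := by rw [E3, E4]
            _ = 1 * (wfac σ τ a * (wfac σ τ b * (wfac σ τ c * wfac σ τ d))) := by ring
      have hsign : (Perm.sign σ' : ℤ) = (Perm.sign σ : ℤ) := by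
        rw [hσ', Perm.sign_mul, ht, Perm.sign_mul, Perm.sign_swap (Ne.symm hca),
          Perm.sign_swap (Ne.symm hdb)]
        push_cast
        ring
      have hsubeq : Perm.sign (σ'.subtypePerm (p := fun w => τ w = w) (fix_iff' hc'))
          = Perm.sign (σ.subtypePerm (p := fun w => τ w = w) (fix_iff' hc)) := by
        congr 1
        apply Equiv.ext
        intro x
        apply Subtype.ext
        simp only [Perm.subtypePerm_apply]
        have hx : τ (x : Fin N) = x := x.prop
        apply hσ'x
        · intro h
          apply ha2
          rw [hb, ← h]
          exact hx
        · intro h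
          rw [h, hba] at hx
          exact hab hx
        · intro h
          rw [h, hτc] at hx
          exact hcd hx.symm
        · intro h
          rw [h, hτd] at hx
          exact hcd hx
      rw [hsplit, hsign, hsubeq] at ihσ'
      linarith [ihσ']

lemma bridge (hτ : τ * τ = 1) (σ : Perm (Fin N)) (hc : Commute σ τ) :
    (∏ a : Fin N, wfac σ τ a)
      = (Perm.sign σ : ℤ) * (Perm.sign (σ.subtypePerm (p := fun w => τ w = w) (fix_iff' hc)) : ℤ) :=
  bridge_aux hτ _ σ hc le_rfl

end bridgemain

section ssign

lemma ssign_eq_prod (σ τ : Perm (Fin N)) : Ssign σ τ = ∏ a : Fin N, wfac σ τ a := by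
  have h1 : (∏ a : Fin N, wfac σ τ a)
      = ∏ a ∈ Finset.univ.filter (fun a => a < τ a ∧ σ (τ a) < σ a), (-1 : ℤ) := by
    rw [Finset.prod_filter]
    apply Finset.prod_congr rfl
    intro a _
    unfold wfac
    split_ifs <;> rfl
  rw [h1, Finset.prod_const]
  unfold Ssign
  congr 1
  apply Finset.card_bij (fun (p : Fin N × Fin N) _ => p.1)
  · intro p hp
    simp only [Finset.mem_filter, Finset.mem_univ, true_and] at hp ⊢
    obtain ⟨h1, h2, h3⟩ := hp
    rw [h2]
    exact ⟨h1, h3⟩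
  · intro p hp q hq hpq
    simp only [Finset.mem_filter, Finset.mem_univ, true_and] at hp hq
    have : p.2 = q.2 := by rw [← hp.2.1, ← hq.2.1, hpq]
    exact Prod.ext hpq this
  · intro a ha
    simp only [Finset.mem_filter, Finset.mem_univ, true_and] at ha
    refine ⟨(a, τ a), ?_, rfl⟩
    rw [Finset.mem_filter]
    exact ⟨Finset.mem_univ _, ha.1, rfl, ha.2⟩

lemma ssign_bridge {τ : Perm (Fin N)} (hτ : τ * τ = 1) (σ : Perm (Fin N))
    (hc : Commute σ τ) :
    Ssign σ τ = (Perm.sign σ : ℤ) * (Perm.sign (σ.subtypePerm (p := fun w => τ w = w) (fix_iff' hc)) : ℤ) := by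
  rw [ssign_eq_prod]
  exact bridge hτ σ hc

end ssign

section blocks

variable {τ κ : Perm (Fin N)} (hτ : τ * τ = 1) (hκ : κ * κ = 1)

/-- d odd divisibility helper -/
lemma odd_dvd_of_dvd_two_mul {d w : ℤ} (m : ℤ) (hd : d = 2*m+1) (h : d ∣ 2*w) : d ∣ w := by
  have h1 : d ∣ w * d := Dvd.intro_left w rfl
  have h2 : d ∣ (2*w) * m := Dvd.dvd.mul_right h m
  have h3 : w = w * d - (2*w)*m := by rw [hd]; ring
  rw [h3]
  exact dvd_sub h1 h2

include hτ hκ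

lemma caseA_orbit {x : Fin N} {t : ℤ} (ht : τ x = ((rho τ κ)^t) x) {y : Fin N}
    (hy : inOrb τ κ x y) : ∃ k : ℤ, y = ((rho τ κ)^k) x := by
  obtain ⟨k, h | h⟩ := hy
  · exact ⟨k, h⟩
  · exact ⟨k + t, by rw [h, ht, ← zpow_add_apply]⟩

lemma fixτ_caseA {x : Fin N} {t : ℤ} (ht : τ x = ((rho τ κ)^t) x) (k : ℤ) :
    τ (((rho τ κ)^k) x) = ((rho τ κ)^k) x ↔ ((per (rho τ κ) x : ℤ)) ∣ t - 2*k := by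
  rw [tau_rho_apply hτ hκ, ht, ← zpow_add_apply, per_congr]
  constructor
  · intro h; have : -k + t - k = t - 2*k := by ring
    rwa [this] at h
  · intro h; have : t - 2*k = -k + t - k := by ring
    rwa [this] at h

lemma fixκ_caseA {x : Fin N} {t : ℤ} (ht : τ x = ((rho τ κ)^t) x) (k : ℤ) :
    κ (((rho τ κ)^k) x) = ((rho τ κ)^k) x ↔ ((per (rho τ κ) x : ℤ)) ∣ t - 1 - 2*k := by
  rw [kappa_rho_apply hτ hκ, ht, ← zpow_add_apply, per_congr]
  constructor
  · intro h; have : -(k+1) + t - k = t - 1 - 2*k := by ring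
    rwa [this] at h
  · intro h; have : t - 1 - 2*k = -(k+1) + t - k := by ring
    rwa [this] at h

lemma caseB_fix {x : Fin N} (hB : ¬ ∃ t : ℤ, τ x = ((rho τ κ)^t) x) {y : Fin N}
    (hy : inOrb τ κ x y) : τ y ≠ y ∧ κ y ≠ y := by
  obtain ⟨k, h | h⟩ := hy
  · constructor
    · intro hfix
      rw [h, tau_rho_apply hτ hκ] at hfix
      apply hB
      refine ⟨2*k, ?_⟩
      have h2 := congrArg (fun w => ((rho τ κ)^k) w) hfix
      simp only [← zpow_add_apply] at h2
      rw [show k + -k = (0:ℤ) by ring, show k + k = 2*k by ring] at h2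
      simpa using h2
    · intro hfix
      rw [h, kappa_rho_apply hτ hκ] at hfix
      apply hB
      refine ⟨2*k+1, ?_⟩
      have h2 := congrArg (fun w => ((rho τ κ)^(k+1)) w) hfix
      simp only [← zpow_add_apply] at h2
      rw [show k + 1 + -(k+1) = (0:ℤ) by ring, show k+1+k = 2*k+1 by ring] at h2
      simpa using h2
  · constructor
    · intro hfix
      rw [h, tau_rho_apply hτ hκ, invol_apply hτ] at hfix
      apply hB
      refine ⟨-2*k, ?_⟩
      have h2 := congrArg (fun w => ((rho τ κ)^(-k)) w) hfix.symm
      simp only [← zpow_add_apply] at h2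
      rw [show -k + k = (0:ℤ) by ring, show -k + -k = -2*k by ring] at h2
      simpa using h2
    · intro hfix
      rw [h, kappa_rho_apply hτ hκ, invol_apply hτ] at hfix
      apply hB
      refine ⟨-2*k-1, ?_⟩
      have h2 := congrArg (fun w => ((rho τ κ)^(-k)) w) hfix.symm
      simp only [← zpow_add_apply] at h2
      rw [show -k + k = (0:ℤ) by ring, show -k + -(k+1) = -2*k-1 by ring] at h2
      simpa using h2

lemma caseB_disjoint {x : Fin N} (hB : ¬ ∃ t : ℤ, τ x = ((rho τ κ)^t) x) (a b : ℤ) :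
    ((rho τ κ)^a) x ≠ ((rho τ κ)^b) (τ x) := by
  intro h
  apply hB
  refine ⟨a - b, ?_⟩
  have := congrArg (fun w => ((rho τ κ)^(-b)) w) h.symm
  simp only [← zpow_add_apply] at this
  rw [show -b + b = (0:ℤ) by ring, show -b + a = a - b by ring] at this
  simpa using this

end blocks

section lambda

variable (τ κ : Perm (Fin N))

noncomputable def basept (y : Fin N) : Fin N :=
  (orb τ κ y).min' ⟨y, mem_orb.2 ⟨0, Or.inl (by simp)⟩⟩

noncomputable def lam (y : Fin N) : Fin N :=
  if hA : ∃ t : ℤ, τ (basept τ κ y) = ((rho τ κ)^t) (basept τ κ y) then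
    if hk : ∃ k : ℤ, y = ((rho τ κ)^k) (basept τ κ y) then
      ((rho τ κ)^(Classical.choose hA
          + ((per (rho τ κ) (basept τ κ y) : ℤ) - 1)/2 - Classical.choose hk))
        (basept τ κ y)
    else y
  else
    if hk : ∃ k : ℤ, y = ((rho τ κ)^k) (basept τ κ y) then
      ((rho τ κ)^(- Classical.choose hk)) (basept τ κ y)
    else if hk' : ∃ k : ℤ, y = ((rho τ κ)^k) (τ (basept τ κ y)) then
      ((rho τ κ)^(-1 - Classical.choose hk')) (τ (basept τ κ y))
    else y

variable {τ κ}
variable (hτ : τ * τ = 1) (hκ : κ * κ = 1)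

lemma basept_inOrb (y : Fin N) : inOrb τ κ y (basept τ κ y) :=
  mem_orb.1 (Finset.min'_mem _ _)

include hτ hκ

lemma basept_eq {y z : Fin N} (h : inOrb τ κ y z) : basept τ κ z = basept τ κ y := by
  unfold basept
  have he : orb τ κ z = orb τ κ y := (orb_eq hτ hκ h).symm
  simp only [he]

lemma lamA_eval {y : Fin N} {t k : ℤ}
    (hA : τ (basept τ κ y) = ((rho τ κ)^t) (basept τ κ y))
    (hk : y = ((rho τ κ)^k) (basept τ κ y)) :
    lam τ κ y = ((rho τ κ)^(t + ((per (rho τ κ) (basept τ κ y) : ℤ) - 1)/2 - k))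
      (basept τ κ y) := by
  unfold lam
  rw [dif_pos ⟨t, hA⟩, dif_pos ⟨k, hk⟩]
  set x := basept τ κ y
  set d := (per (rho τ κ) x : ℤ)
  have ht2 := Classical.choose_spec (⟨t, hA⟩ : ∃ t : ℤ, τ x = ((rho τ κ)^t) x)
  have hk2 := Classical.choose_spec (⟨k, hk⟩ : ∃ k : ℤ, y = ((rho τ κ)^k) x)
  set t2 := Classical.choose (⟨t, hA⟩ : ∃ t : ℤ, τ x = ((rho τ κ)^t) x)
  set k2 := Classical.choose (⟨k, hk⟩ : ∃ k : ℤ, y = ((rho τ κ)^k) x)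
  have hd1 : d ∣ t2 - t := (per_congr _ _ _ _).1 (by rw [← ht2, hA])
  have hd2 : d ∣ k2 - k := (per_congr _ _ _ _).1 (by rw [← hk2, hk])
  apply (per_congr _ _ _ _).2
  have he : (t2 + (d-1)/2 - k2) - (t + (d-1)/2 - k) = (t2 - t) - (k2 - k) := by ring
  rw [he]
  exact dvd_sub hd1 hd2

lemma lamB_eval1 {y : Fin N}
    (hB : ¬ ∃ t : ℤ, τ (basept τ κ y) = ((rho τ κ)^t) (basept τ κ y)) {k : ℤ}
    (hk : y = ((rho τ κ)^k) (basept τ κ y)) :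
    lam τ κ y = ((rho τ κ)^(-k)) (basept τ κ y) := by
  unfold lam
  rw [dif_neg hB, dif_pos ⟨k, hk⟩]
  set x := basept τ κ y
  have hk2 := Classical.choose_spec (⟨k, hk⟩ : ∃ k : ℤ, y = ((rho τ κ)^k) x)
  set k2 := Classical.choose (⟨k, hk⟩ : ∃ k : ℤ, y = ((rho τ κ)^k) x)
  have hd2 : (per (rho τ κ) x : ℤ) ∣ k2 - k := (per_congr _ _ _ _).1 (by rw [← hk2, hk])
  apply (per_congr _ _ _ _).2
  have he : (-k2) - (-k) = -(k2 - k) := by ring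
  rw [he]
  exact dvd_neg.2 hd2

lemma lamB_eval2 {y : Fin N}
    (hB : ¬ ∃ t : ℤ, τ (basept τ κ y) = ((rho τ κ)^t) (basept τ κ y)) {k : ℤ}
    (hk : y = ((rho τ κ)^k) (τ (basept τ κ y))) :
    lam τ κ y = ((rho τ κ)^(-1-k)) (τ (basept τ κ y)) := by
  unfold lam
  have h1 : ¬ ∃ j : ℤ, y = ((rho τ κ)^j) (basept τ κ y) := by
    rintro ⟨j, hj⟩
    exact caseB_disjoint hτ hκ hB j k (hj.symm.trans hk)
  rw [dif_neg hB, dif_neg h1, dif_pos ⟨k, hk⟩]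
  set x := basept τ κ y
  have hk2 := Classical.choose_spec (⟨k, hk⟩ : ∃ k : ℤ, y = ((rho τ κ)^k) (τ x))
  set k2 := Classical.choose (⟨k, hk⟩ : ∃ k : ℤ, y = ((rho τ κ)^k) (τ x))
  have hd2 : (per (rho τ κ) (τ x) : ℤ) ∣ k2 - k :=
    (per_congr _ _ _ _).1 (by rw [← hk2, hk])
  apply (per_congr _ _ _ _).2
  have he : (-1-k2) - (-1-k) = -(k2 - k) := by ring
  rw [he]
  exact dvd_neg.2 hd2

lemma lam_inOrb (y : Fin N) : inOrb τ κ y (lam τ κ y) := by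
  have hxy : inOrb τ κ y (basept τ κ y) := basept_inOrb y
  have hyx : inOrb τ κ (basept τ κ y) y := inOrb_symm hτ hκ hxy
  by_cases hA : ∃ t : ℤ, τ (basept τ κ y) = ((rho τ κ)^t) (basept τ κ y)
  · obtain ⟨t, ht⟩ := hA
    obtain ⟨k, hk⟩ := caseA_orbit hτ hκ ht hyx
    rw [lamA_eval hτ hκ ht hk]
    exact inOrb_rho hτ hκ _ hxy
  · obtain ⟨k, hk | hk⟩ := hyx
    · rw [lamB_eval1 hτ hκ hA hk]
      exact inOrb_rho hτ hκ _ hxy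
    · rw [lamB_eval2 hτ hκ hA hk]
      exact inOrb_rho hτ hκ _ (inOrb_tau hτ hκ hxy)

lemma lam_invol (y : Fin N) : lam τ κ (lam τ κ y) = y := by
  have hxy : inOrb τ κ y (basept τ κ y) := basept_inOrb y
  have hyx : inOrb τ κ (basept τ κ y) y := inOrb_symm hτ hκ hxy
  have hbz : basept τ κ (lam τ κ y) = basept τ κ y := basept_eq hτ hκ (lam_inOrb hτ hκ y)
  by_cases hA : ∃ t : ℤ, τ (basept τ κ y) = ((rho τ κ)^t) (basept τ κ y)
  · obtain ⟨t, ht⟩ := hA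
    obtain ⟨k, hk⟩ := caseA_orbit hτ hκ ht hyx
    have h1 := lamA_eval hτ hκ ht hk
    have h2 : lam τ κ (lam τ κ y)
        = ((rho τ κ)^(t + ((per (rho τ κ) (basept τ κ y) : ℤ) - 1)/2
            - (t + ((per (rho τ κ) (basept τ κ y) : ℤ) - 1)/2 - k)))
          (basept τ κ y) := by
      have := lamA_eval hτ hκ (y := lam τ κ y) (t := t)
        (k := t + ((per (rho τ κ) (basept τ κ y) : ℤ) - 1)/2 - k)
        (by rw [hbz]; exact ht) (by rw [hbz]; exact h1)
      rwa [hbz] at this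
    rw [h2, show t + ((per (rho τ κ) (basept τ κ y) : ℤ) - 1)/2
        - (t + ((per (rho τ κ) (basept τ κ y) : ℤ) - 1)/2 - k) = k by ring]
    exact hk.symm
  · obtain ⟨k, hk | hk⟩ := hyx
    · have h1 := lamB_eval1 hτ hκ hA hk
      have h2 : lam τ κ (lam τ κ y) = ((rho τ κ)^(-(-k))) (basept τ κ y) := by
        have := lamB_eval1 hτ hκ (y := lam τ κ y)
          (by rw [hbz]; exact hA) (k := -k) (by rw [hbz]; exact h1)
        rwa [hbz] at this
      rw [h2, neg_neg]
      exact hk.symm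
    · have h1 := lamB_eval2 hτ hκ hA hk
      have h2 : lam τ κ (lam τ κ y) = ((rho τ κ)^(-1-(-1-k))) (τ (basept τ κ y)) := by
        have := lamB_eval2 hτ hκ (y := lam τ κ y)
          (by rw [hbz]; exact hA) (k := -1-k) (by rw [hbz]; exact h1)
        rwa [hbz] at this
      rw [h2, show -1-(-1-k) = k by ring]
      exact hk.symm

end lambda

section conj

variable {τ κ : Perm (Fin N)} (hτ : τ * τ = 1) (hκ : κ * κ = 1)

include hτ hκ

lemma lam_conj
    (hOdd : ∀ y : Fin N, (∃ t : ℤ, τ (basept τ κ y) = ((rho τ κ)^t) (basept τ κ y)) →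
      Odd (per (rho τ κ) (basept τ κ y)))
    (y : Fin N) : lam τ κ (τ (lam τ κ y)) = κ y := by
  have hxy : inOrb τ κ y (basept τ κ y) := basept_inOrb y
  have hyx : inOrb τ κ (basept τ κ y) y := inOrb_symm hτ hκ hxy
  by_cases hA : ∃ t : ℤ, τ (basept τ κ y) = ((rho τ κ)^t) (basept τ κ y)
  · obtain ⟨m', hm'⟩ := hOdd y hA
    obtain ⟨t, ht⟩ := hA
    obtain ⟨k, hk⟩ := caseA_orbit hτ hκ ht hyx
    have hdm : (per (rho τ κ) (basept τ κ y) : ℤ) = 2*(m' : ℤ)+1 := by omega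
    have he : ((per (rho τ κ) (basept τ κ y) : ℤ) - 1)/2 = (m' : ℤ) := by
      rw [hdm]; omega
    have h1 := lamA_eval hτ hκ ht hk
    rw [he] at h1
    have h2 : τ (lam τ κ y) = ((rho τ κ)^(k - (m' : ℤ))) (basept τ κ y) := by
      rw [h1, tau_rho_apply hτ hκ, ht, ← zpow_add_apply,
        show -(t + (m' : ℤ) - k) + t = k - (m' : ℤ) by ring]
    have hbz : basept τ κ (τ (lam τ κ y)) = basept τ κ y :=
      basept_eq hτ hκ (by rw [h2]; exact inOrb_rho hτ hκ _ hxy)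
    have h3 := lamA_eval hτ hκ (y := τ (lam τ κ y)) (t := t) (k := k - (m' : ℤ))
        (by rw [hbz]; exact ht) (by rw [hbz]; exact h2)
    rw [hbz, he] at h3
    have h4 : κ y = ((rho τ κ)^(t - k - 1)) (basept τ κ y) := by
      conv_lhs => rw [hk]
      rw [kappa_rho_apply hτ hκ, ht, ← zpow_add_apply,
        show -(k+1) + t = t - k - 1 by ring]
    rw [h3, h4]
    apply (per_congr _ _ _ _).2
    rw [hdm]
    exact ⟨1, by ring⟩
  · obtain ⟨k, hk | hk⟩ := hyx
    · have h1 := lamB_eval1 hτ hκ hA hk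
      have h2 : τ (lam τ κ y) = ((rho τ κ)^k) (τ (basept τ κ y)) := by
        rw [h1, tau_rho_apply hτ hκ, neg_neg]
      have hbz : basept τ κ (τ (lam τ κ y)) = basept τ κ y :=
        basept_eq hτ hκ (by
          rw [h2]; exact inOrb_rho hτ hκ _ (inOrb_tau hτ hκ hxy))
      have h3 := lamB_eval2 hτ hκ (y := τ (lam τ κ y))
        (by rw [hbz]; exact hA) (k := k) (by rw [hbz]; exact h2)
      rw [hbz] at h3
      have h4 : κ y = ((rho τ κ)^(-(k+1))) (τ (basept τ κ y)) := by
        conv_lhs => rw [hk]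
        rw [kappa_rho_apply hτ hκ]
      rw [h3, h4, show -1 - k = -(k+1) by ring]
    · have h1 := lamB_eval2 hτ hκ hA hk
      have h2 : τ (lam τ κ y) = ((rho τ κ)^(1+k)) (basept τ κ y) := by
        rw [h1, tau_rho_apply hτ hκ, invol_apply hτ, show -(-1-k) = 1+k by ring]
      have hbz : basept τ κ (τ (lam τ κ y)) = basept τ κ y :=
        basept_eq hτ hκ (by rw [h2]; exact inOrb_rho hτ hκ _ hxy)
      have h3 := lamB_eval1 hτ hκ (y := τ (lam τ κ y))
        (by rw [hbz]; exact hA) (k := 1+k) (by rw [hbz]; exact h2)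
      rw [hbz] at h3
      have h4 : κ y = ((rho τ κ)^(-(k+1))) (basept τ κ y) := by
        conv_lhs => rw [hk]
        rw [kappa_rho_apply hτ hκ, invol_apply hτ]
      rw [h3, h4, show -(1+k) = -(k+1) by ring]

lemma step2'
    (hOdd : ∀ y : Fin N, (∃ t : ℤ, τ (basept τ κ y) = ((rho τ κ)^t) (basept τ κ y)) →
      Odd (per (rho τ κ) (basept τ κ y))) :
    ∃ l : Perm (Fin N), l * l = 1 ∧
      (∀ H : Finset (Fin N), IsCharBlock τ κ H → InvSet l H) ∧ l * τ * l⁻¹ = κ := by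
  refine ⟨⟨lam τ κ, lam τ κ, fun y => lam_invol hτ hκ y, fun y => lam_invol hτ hκ y⟩,
    ?_, ?_, ?_⟩
  · apply Equiv.ext
    intro y
    show lam τ κ (lam τ κ y) = y
    exact lam_invol hτ hκ y
  · intro H hH a ha
    have hH2 := block_eq_orb hτ hκ hH ha
    rw [hH2]
    show lam τ κ a ∈ orb τ κ a
    exact mem_orb.2 (lam_inOrb hτ hκ a)
  · apply Equiv.ext
    intro y
    show lam τ κ (τ (lam τ κ y)) = κ y
    exact lam_conj hτ hκ hOdd y

end conj

section fixsets

variable {τ κ : Perm (Fin N)} (hτ : τ * τ = 1) (hκ : κ * κ = 1)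

include hτ hκ

lemma kappa_rho_zpow (k : ℤ) : κ * (rho τ κ) ^ k * κ = (rho τ κ) ^ (-k) := by
  have hτi : τ⁻¹ = τ := by rw [inv_eq_iff_mul_eq_one, hτ]
  have hκi : κ⁻¹ = κ := by rw [inv_eq_iff_mul_eq_one, hκ]
  have h2 : MulAut.conj κ (rho τ κ) = (rho τ κ)⁻¹ := by
    simp only [MulAut.conj_apply, hκi, rho]
    rw [show κ * (τ * κ) * κ = (κ * τ) * (κ * κ) by group, hκ, mul_one,
      mul_inv_rev, hτi, hκi]
  have h3 := map_zpow (MulAut.conj κ) (rho τ κ) k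
  rw [h2] at h3
  have h4 : κ * (rho τ κ) ^ k * κ⁻¹ = (rho τ κ)^(-k) := by
    simpa [MulAut.conj_apply, inv_zpow, zpow_neg] using h3
  rwa [hκi] at h4

lemma kappa_rho_apply' (k : ℤ) (z : Fin N) :
    κ (((rho τ κ) ^ k) z) = ((rho τ κ) ^ (-k)) (κ z) := by
  conv_rhs => rw [← kappa_rho_zpow hτ hκ k]
  simp [Perm.mul_apply, invol_apply hκ]

omit hτ hκ in
lemma int_even_case {L s k u : ℤ} (hc : 2*s - 2*k = 2*L*(u+u)) : k - s = 2*L*(-u) := by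
  have h := mul_left_cancel₀ (two_ne_zero) (show (2:ℤ)*(s-k) = 2*(L*(u+u)) by linear_combination hc)
  linear_combination -h

omit hτ hκ in
lemma int_odd_case {L s k u : ℤ} (hc : 2*s - 2*k = 2*L*(2*u+1)) : k - (s+L) = 2*L*(-u-1) := by
  have h := mul_left_cancel₀ (two_ne_zero) (show (2:ℤ)*(s-k) = 2*(L*(2*u+1)) by linear_combination hc)
  linear_combination -h

lemma oddA_fixτ_unique {x : Fin N} {t m : ℤ} (ht : τ x = ((rho τ κ)^t) x)
    (hdm : (per (rho τ κ) x : ℤ) = 2*m+1) :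
    ∃! z, (inOrb τ κ x z ∧ τ z = z) := by
  refine ⟨((rho τ κ)^(t*(m+1))) x, ⟨⟨t*(m+1), Or.inl rfl⟩, ?_⟩, ?_⟩
  · rw [fixτ_caseA hτ hκ ht, hdm]
    exact ⟨-t, by ring⟩
  · rintro z ⟨hz1, hz2⟩
    obtain ⟨k, hk⟩ := caseA_orbit hτ hκ ht hz1
    rw [hk] at hz2 ⊢
    rw [fixτ_caseA hτ hκ ht] at hz2
    apply (per_congr _ _ _ _).2
    have h2 : (per (rho τ κ) x : ℤ) ∣ t - 2*(t*(m+1)) := by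
      rw [hdm]; exact ⟨-t, by ring⟩
    have h3 : (per (rho τ κ) x : ℤ) ∣ 2*(k - t*(m+1)) := by
      have := dvd_sub hz2 h2
      have he : t - 2*k - (t - 2*(t*(m+1))) = -(2*(k - t*(m+1))) := by ring
      rw [he] at this
      exact (dvd_neg.1 this)
    exact odd_dvd_of_dvd_two_mul m hdm h3

lemma oddA_fixκ_unique {x : Fin N} {t m : ℤ} (ht : τ x = ((rho τ κ)^t) x)
    (hdm : (per (rho τ κ) x : ℤ) = 2*m+1) :
    ∃! z, (inOrb τ κ x z ∧ κ z = z) := by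
  refine ⟨((rho τ κ)^((t-1)*(m+1))) x, ⟨⟨(t-1)*(m+1), Or.inl rfl⟩, ?_⟩, ?_⟩
  · rw [fixκ_caseA hτ hκ ht, hdm]
    exact ⟨-(t-1), by ring⟩
  · rintro z ⟨hz1, hz2⟩
    obtain ⟨k, hk⟩ := caseA_orbit hτ hκ ht hz1
    rw [hk] at hz2 ⊢
    rw [fixκ_caseA hτ hκ ht] at hz2
    apply (per_congr _ _ _ _).2
    have h2 : (per (rho τ κ) x : ℤ) ∣ t - 1 - 2*((t-1)*(m+1)) := by
      rw [hdm]; exact ⟨-(t-1), by ring⟩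
    have h3 : (per (rho τ κ) x : ℤ) ∣ 2*(k - (t-1)*(m+1)) := by
      have := dvd_sub hz2 h2
      have he : t - 1 - 2*k - (t - 1 - 2*((t-1)*(m+1))) = -(2*(k - (t-1)*(m+1))) := by ring
      rw [he] at this
      exact (dvd_neg.1 this)
    exact odd_dvd_of_dvd_two_mul m hdm h3

lemma filter_card_one {π : Perm (Fin N)} {x : Fin N}
    (hu : ∃! z, (inOrb τ κ x z ∧ π z = z)) :
    ((orb τ κ x).filter (fun z => π z = z)).card = 1 := by
  obtain ⟨u, hu1, hu2⟩ := hu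
  rw [Finset.card_eq_one]
  refine ⟨u, ?_⟩
  ext z
  simp only [Finset.mem_filter, Finset.mem_singleton, mem_orb]
  constructor
  · rintro ⟨h1, h2⟩
    exact hu2 z ⟨h1, h2⟩
  · rintro rfl
    exact ⟨hu1.1, hu1.2⟩

/-- case A with even period : exactly two τ-fixed points, no κ-fixed (t even) -/
lemma evenA_fixτ {x : Fin N} {t L s : ℤ} (ht : τ x = ((rho τ κ)^t) x)
    (hL : (per (rho τ κ) x : ℤ) = 2*L) (hs : t = 2*s) :
    (orb τ κ x).filter (fun z => τ z = z)
      = {((rho τ κ)^s) x, ((rho τ κ)^(s+L)) x} := by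
  ext z
  simp only [Finset.mem_filter, Finset.mem_insert, Finset.mem_singleton, mem_orb]
  constructor
  · rintro ⟨h1, h2⟩
    obtain ⟨k, hk⟩ := caseA_orbit hτ hκ ht h1
    rw [hk] at h2 ⊢
    rw [fixτ_caseA hτ hκ ht] at h2
    rw [hL, hs] at h2
    obtain ⟨c, hc⟩ := h2
    rcases Int.even_or_odd c with ⟨u, hu⟩ | ⟨u, hu⟩
    · left
      apply (per_congr _ _ _ _).2
      rw [hL]
      refine ⟨-u, ?_⟩
      rw [hu] at hc
      exact int_even_case hc
    · right
      apply (per_congr _ _ _ _).2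
      rw [hL]
      refine ⟨-u-1, ?_⟩
      rw [hu] at hc
      exact int_odd_case hc
  · rintro (rfl | rfl)
    · refine ⟨⟨s, Or.inl rfl⟩, ?_⟩
      rw [fixτ_caseA hτ hκ ht]
      exact ⟨0, by omega⟩
    · refine ⟨⟨s+L, Or.inl rfl⟩, ?_⟩
      rw [fixτ_caseA hτ hκ ht, hL]
      exact ⟨-1, by omega⟩

lemma evenA_fixκ {x : Fin N} {t L s : ℤ} (ht : τ x = ((rho τ κ)^t) x)
    (hL : (per (rho τ κ) x : ℤ) = 2*L) (hs : t = 2*s) :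
    (orb τ κ x).filter (fun z => κ z = z) = ∅ := by
  rw [Finset.eq_empty_iff_forall_notMem]
  intro z hz
  simp only [Finset.mem_filter, mem_orb] at hz
  obtain ⟨h1, h2⟩ := hz
  obtain ⟨k, hk⟩ := caseA_orbit hτ hκ ht h1
  rw [hk, fixκ_caseA hτ hκ ht] at h2
  rw [hL, hs] at h2
  obtain ⟨c, hc⟩ := h2
  have : ∃ e : ℤ, L * c = e := ⟨L*c, rfl⟩
  obtain ⟨e, he⟩ := this
  rw [show 2*L*c = 2*(L*c) by ring, he] at hc
  omega

lemma evenA_two_ne {x : Fin N} {L s : ℤ} (hL : (per (rho τ κ) x : ℤ) = 2*L) :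
    ((rho τ κ)^s) x ≠ ((rho τ κ)^(s+L)) x := by
  intro h
  have h2 := (per_congr _ _ _ _).1 h
  rw [show s - (s+L) = -L by ring] at h2
  have h3 : (per (rho τ κ) x : ℤ) ∣ L := (dvd_neg.1 h2)
  have hp : (0:ℤ) < (per (rho τ κ) x : ℤ) := by exact_mod_cast per_pos (rho τ κ) x
  have hL0 : 0 < L := by omega
  have := Int.le_of_dvd hL0 h3
  omega

/-- d even forces the two fixed-point counts in the block to differ -/
lemma caseA_even_cards {x : Fin N} {t : ℤ} (ht : τ x = ((rho τ κ)^t) x)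
    (heven : ¬ Odd (per (rho τ κ) x)) :
    ((orb τ κ x).filter (fun z => τ z = z)).card
      ≠ ((orb τ κ x).filter (fun z => κ z = z)).card := by
  rw [Nat.odd_iff] at heven
  have h2 : per (rho τ κ) x % 2 = 0 := by omega
  obtain ⟨L', hL'⟩ := Nat.dvd_of_mod_eq_zero h2
  have hL : (per (rho τ κ) x : ℤ) = 2 * (L' : ℤ) := by exact_mod_cast hL'
  rcases Int.even_or_odd t with ⟨s, hs⟩ | ⟨s, hs⟩
  · have hs2 : t = 2*s := by omega
    rw [evenA_fixτ hτ hκ ht hL hs2, evenA_fixκ hτ hκ ht hL hs2]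
    rw [Finset.card_insert_of_notMem (by
      simp only [Finset.mem_singleton]
      exact evenA_two_ne hτ hκ hL), Finset.card_singleton]
    simp
  · -- t odd : swap roles via direct computation: τ-fixed empty, κ-fixed two.
    have hfixτ : (orb τ κ x).filter (fun z => τ z = z) = ∅ := by
      rw [Finset.eq_empty_iff_forall_notMem]
      intro z hz
      simp only [Finset.mem_filter, mem_orb] at hz
      obtain ⟨h1, h2⟩ := hz
      obtain ⟨k, hk⟩ := caseA_orbit hτ hκ ht h1
      rw [hk, fixτ_caseA hτ hκ ht] at h2
      rw [hL] at h2
      obtain ⟨c, hc⟩ := h2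
      have : ∃ e : ℤ, (L' : ℤ) * c = e := ⟨_, rfl⟩
      obtain ⟨e, he⟩ := this
      rw [show 2*(L':ℤ)*c = 2*((L':ℤ)*c) by ring, he] at hc
      omega
    have hfixκ : (orb τ κ x).filter (fun z => κ z = z)
        = {((rho τ κ)^s) x, ((rho τ κ)^(s+(L':ℤ))) x} := by
      ext z
      simp only [Finset.mem_filter, Finset.mem_insert, Finset.mem_singleton, mem_orb]
      constructor
      · rintro ⟨h1, h2⟩
        obtain ⟨k, hk⟩ := caseA_orbit hτ hκ ht h1
        rw [hk] at h2 ⊢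
        rw [fixκ_caseA hτ hκ ht] at h2
        rw [hL, hs] at h2
        obtain ⟨c, hc⟩ := h2
        rcases Int.even_or_odd c with ⟨u, hu⟩ | ⟨u, hu⟩
        · left
          apply (per_congr _ _ _ _).2
          rw [hL]
          refine ⟨-u, ?_⟩
          rw [hu] at hc
          have hc2 : 2*s - 2*k = 2*((L':ℕ):ℤ)*(u+u) := by linear_combination hc
          exact int_even_case hc2
        · right
          apply (per_congr _ _ _ _).2
          rw [hL]
          refine ⟨-u-1, ?_⟩
          rw [hu] at hc
          have hc2 : 2*s - 2*k = 2*((L':ℕ):ℤ)*(2*u+1) := by linear_combination hc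
          exact int_odd_case hc2
      · rintro (rfl | rfl)
        · refine ⟨⟨s, Or.inl rfl⟩, ?_⟩
          rw [fixκ_caseA hτ hκ ht]
          exact ⟨0, by omega⟩
        · refine ⟨⟨s+(L':ℤ), Or.inl rfl⟩, ?_⟩
          rw [fixκ_caseA hτ hκ ht, hL]
          refine ⟨-1, by omega⟩
    rw [hfixτ, hfixκ]
    rw [Finset.card_insert_of_notMem (by
      simp only [Finset.mem_singleton]
      exact evenA_two_ne hτ hκ hL), Finset.card_singleton]
    simp

end fixsets

section stepone

variable {τ κ : Perm (Fin N)} (hτ : τ * τ = 1) (hκ : κ * κ = 1)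

lemma per_inv (g : Perm (Fin N)) (x : Fin N) : per g⁻¹ x = per g x := by
  have key : ∀ (h : Perm (Fin N)) n, (h^n) x = x → ((h⁻¹)^n) x = x := by
    intro h n hn
    calc ((h⁻¹)^n) x = ((h⁻¹)^n) ((h^n) x) := by rw [hn]
      _ = (((h^n)⁻¹) * (h^n)) x := by rw [inv_pow]; rfl
      _ = x := by rw [inv_mul_cancel]; rfl
  apply le_antisymm
  · apply Nat.find_min'
    refine ⟨per_pos g x, key g _ ?_⟩
    have := per_spec g x
    rwa [zpow_natCast] at this
  · apply Nat.find_min'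
    refine ⟨per_pos g⁻¹ x, ?_⟩
    have h2 := key g⁻¹ (per g⁻¹ x) (by
      have := per_spec g⁻¹ x
      rwa [zpow_natCast] at this)
    rwa [inv_inv] at h2

include hτ hκ

lemma rho_swap : rho κ τ = (rho τ κ)⁻¹ := by
  have hτi : τ⁻¹ = τ := by rw [inv_eq_iff_mul_eq_one, hτ]
  have hκi : κ⁻¹ = κ := by rw [inv_eq_iff_mul_eq_one, hκ]
  rw [rho, rho, mul_inv_rev, hτi, hκi]

lemma step1_core {x : Fin N} {t L s : ℤ} (ht : τ x = ((rho τ κ)^t) x)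
    (hL : (per (rho τ κ) x : ℤ) = 2*L) (hs : t = 2*s) :
    ∃ σ : Perm (Fin N), Commute σ τ ∧ Commute σ κ ∧ Ssign σ τ * Ssign σ κ = -1 := by
  set B := orb τ κ x with hB
  have hCB := charBlock_orb hτ hκ x
  have hBτ : InvSet τ B := hCB.2.1
  have hBκ : InvSet κ B := hCB.2.2.1
  have hmem : ∀ (k : ℤ) y, y ∈ B → ((rho τ κ)^k) y ∈ B :=
    fun k y hy => invSet_zpow hBτ hBκ hy k
  have hτmem : ∀ y, y ∈ B ↔ τ y ∈ B := by
    intro y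
    refine ⟨fun h => hBτ y h, fun h => ?_⟩
    have := hBτ _ h
    rwa [invol_apply hτ] at this
  have hκmem : ∀ y, y ∈ B ↔ κ y ∈ B := by
    intro y
    refine ⟨fun h => hBκ y h, fun h => ?_⟩
    have := hBκ _ h
    rwa [invol_apply hκ] at this
  have hper : ∀ y, y ∈ B → ((rho τ κ)^(2*L)) y = y := by
    intro y hy
    obtain ⟨j, hj⟩ := caseA_orbit hτ hκ ht (mem_orb.1 hy)
    rw [hj, ← zpow_add_apply]
    apply (per_congr _ _ _ _).2
    rw [hL]
    exact ⟨1, by ring⟩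
  have hleft : ∀ y : Fin N,
      (if (if y ∈ B then ((rho τ κ)^L) y else y) ∈ B
        then ((rho τ κ)^(-L)) (if y ∈ B then ((rho τ κ)^L) y else y)
        else (if y ∈ B then ((rho τ κ)^L) y else y)) = y := by
    intro y
    by_cases hy : y ∈ B
    · rw [if_pos hy, if_pos (hmem L y hy), ← zpow_add_apply,
        show -L + L = (0:ℤ) by ring, zpow_zero]
      rfl
    · rw [if_neg hy, if_neg hy]
  have hright : ∀ y : Fin N,
      (if (if y ∈ B then ((rho τ κ)^(-L)) y else y) ∈ B
        then ((rho τ κ)^L) (if y ∈ B then ((rho τ κ)^(-L)) y else y)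
        else (if y ∈ B then ((rho τ κ)^(-L)) y else y)) = y := by
    intro y
    by_cases hy : y ∈ B
    · rw [if_pos hy, if_pos (hmem (-L) y hy), ← zpow_add_apply,
        show L + -L = (0:ℤ) by ring, zpow_zero]
      rfl
    · rw [if_neg hy, if_neg hy]
  set σ : Perm (Fin N) :=
    ⟨fun y => if y ∈ B then ((rho τ κ)^L) y else y,
     fun y => if y ∈ B then ((rho τ κ)^(-L)) y else y,
     fun y => hleft y, fun y => hright y⟩ with hσdef
  have hσap : ∀ y, σ y = if y ∈ B then ((rho τ κ)^L) y else y := fun _ => rfl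
  have hhalf : ∀ y, y ∈ B → ((rho τ κ)^L) y = ((rho τ κ)^(-L)) y := by
    intro y hy
    have h3 := congrArg (fun w => ((rho τ κ)^(-L)) w) (hper y hy)
    simp only [← zpow_add_apply] at h3
    rw [show -L + 2*L = L by ring] at h3
    exact h3
  have hcommτ : Commute σ τ := by
    apply Equiv.ext
    intro z
    show σ (τ z) = τ (σ z)
    by_cases hz : z ∈ B
    · rw [hσap, hσap, if_pos ((hτmem z).1 hz), if_pos hz, tau_rho_apply hτ hκ]
      exact hhalf (τ z) ((hτmem z).1 hz)
    · rw [hσap, hσap, if_neg (fun h => hz ((hτmem z).2 h)), if_neg hz]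
  have hcommκ : Commute σ κ := by
    apply Equiv.ext
    intro z
    show σ (κ z) = κ (σ z)
    by_cases hz : z ∈ B
    · rw [hσap, hσap, if_pos ((hκmem z).1 hz), if_pos hz, kappa_rho_apply' hτ hκ]
      exact hhalf (κ z) ((hκmem z).1 hz)
    · rw [hσap, hσap, if_neg (fun h => hz ((hκmem z).2 h)), if_neg hz]
  set p := ((rho τ κ)^s) x with hpdef
  set q := ((rho τ κ)^(s+L)) x with hqdef
  have hτp : τ p = p := by
    rw [hpdef, fixτ_caseA hτ hκ ht]
    exact ⟨0, by omega⟩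
  have hτq : τ q = q := by
    rw [hqdef, fixτ_caseA hτ hκ ht, hL]
    exact ⟨-1, by omega⟩
  have hpq : p ≠ q := evenA_two_ne hτ hκ hL
  have hpB : p ∈ B := mem_orb.2 ⟨s, Or.inl rfl⟩
  have hqB : q ∈ B := mem_orb.2 ⟨s+L, Or.inl rfl⟩
  have hτfix : ∀ z, τ z = z → z ∈ B → (z = p ∨ z = q) := by
    intro z h1 h2
    have h3 : z ∈ (orb τ κ x).filter (fun z => τ z = z) :=
      Finset.mem_filter.2 ⟨h2, h1⟩
    rw [evenA_fixτ hτ hκ ht hL hs] at h3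
    simpa using h3
  have hκfix : ∀ z, κ z = z → z ∉ B := by
    intro z h1 h2
    have h3 : z ∈ (orb τ κ x).filter (fun z => κ z = z) :=
      Finset.mem_filter.2 ⟨h2, h1⟩
    rw [evenA_fixκ hτ hκ ht hL hs] at h3
    simpa using h3
  have hσp : σ p = q := by
    rw [hσap, if_pos hpB, hpdef, ← zpow_add_apply, show L + s = s + L by ring]
  have hσq : σ q = p := by
    rw [hσap, if_pos hqB, hqdef, ← zpow_add_apply]
    apply (per_congr _ _ _ _).2
    rw [hL]
    exact ⟨1, by ring⟩
  have hsτ : σ.subtypePerm (p := fun w => τ w = w) (fix_iff' hcommτ)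
      = Equiv.swap (⟨p, hτp⟩ : {w : Fin N // τ w = w}) ⟨q, hτq⟩ := by
    apply Equiv.ext
    rintro ⟨z, hz⟩
    apply Subtype.ext
    simp only [Perm.subtypePerm_apply]
    by_cases h1 : z = p
    · have he : (⟨z, hz⟩ : {w : Fin N // τ w = w}) = ⟨p, hτp⟩ := Subtype.ext h1
      rw [he, Equiv.swap_apply_left, h1, hσp]
    · by_cases h2 : z = q
      · have he : (⟨z, hz⟩ : {w : Fin N // τ w = w}) = ⟨q, hτq⟩ := Subtype.ext h2
        rw [he, Equiv.swap_apply_right, h2, hσq]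
      · rw [Equiv.swap_apply_of_ne_of_ne
          (fun h => h1 (congrArg Subtype.val h)) (fun h => h2 (congrArg Subtype.val h))]
        have hzB : z ∉ B := by
          intro hcon
          rcases hτfix z hz hcon with h | h
          · exact h1 h
          · exact h2 h
        rw [hσap, if_neg hzB]
  have hsκ : σ.subtypePerm (p := fun w => κ w = w) (fix_iff' hcommκ) = 1 := by
    apply Equiv.ext
    rintro ⟨z, hz⟩
    apply Subtype.ext
    simp only [Perm.subtypePerm_apply]
    show σ z = z
    rw [hσap, if_neg (hκfix z hz)]
  refine ⟨σ, hcommτ, hcommκ, ?_⟩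
  rw [ssign_bridge hτ σ hcommτ, ssign_bridge hκ σ hcommκ, hsτ, hsκ]
  rw [Perm.sign_swap (fun h => hpq (congrArg Subtype.val h)), Perm.sign_one]
  have h2 : (Perm.sign σ) * (Perm.sign σ) = 1 := Int.units_mul_self _
  have hc : ((Perm.sign σ : ℤˣ) : ℤ) * ((Perm.sign σ : ℤˣ) : ℤ) = 1 := by
    rw [← Units.val_mul, h2, Units.val_one]
  push_cast
  linear_combination -hc

lemma step1
    (hbad : ∃ B, IsCharBlock τ κ B ∧
      ((B.filter (fun z => τ z = z)).card ≠ (B.filter (fun z => κ z = z)).card)) :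
    ∃ σ : Perm (Fin N), Commute σ τ ∧ Commute σ κ ∧ Ssign σ τ * Ssign σ κ = -1 := by
  obtain ⟨B, hB, hcards⟩ := hbad
  obtain ⟨x, hx⟩ := hB.1
  rw [block_eq_orb hτ hκ hB hx] at hcards
  by_cases hA : ∃ t : ℤ, τ x = ((rho τ κ)^t) x
  · obtain ⟨t, ht⟩ := hA
    by_cases hodd : Odd (per (rho τ κ) x)
    · exfalso
      obtain ⟨m', hm'⟩ := hodd
      have hdm : (per (rho τ κ) x : ℤ) = 2*(m' : ℤ)+1 := by exact_mod_cast hm'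
      exact hcards (by
        rw [filter_card_one hτ hκ (oddA_fixτ_unique hτ hκ ht hdm),
          filter_card_one hτ hκ (oddA_fixκ_unique hτ hκ ht hdm)])
    · rw [Nat.odd_iff] at hodd
      have h2 : per (rho τ κ) x % 2 = 0 := by omega
      obtain ⟨L', hL'⟩ := Nat.dvd_of_mod_eq_zero h2
      have hL : (per (rho τ κ) x : ℤ) = 2 * (L' : ℤ) := by exact_mod_cast hL'
      rcases Int.even_or_odd t with ⟨s, hsev⟩ | ⟨s, hsev⟩
      · exact step1_core hτ hκ (s := s) ht hL (by omega)
      · have hrswap : rho κ τ = (rho τ κ)⁻¹ := rho_swap hτ hκ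
        have hper' : (per (rho κ τ) x : ℤ) = 2*(L' : ℤ) := by
          rw [hrswap, per_inv]; exact hL
        have ht' : κ x = ((rho κ τ)^(1-t)) x := by
          have h0 : τ ((rho τ κ) x) = κ x := by
            rw [rho]
            simp [Perm.mul_apply, invol_apply hτ]
          have h1 : κ x = ((rho τ κ)^(t-1)) x := by
            rw [← h0, show (rho τ κ) x = ((rho τ κ)^(1:ℤ)) x by simp,
              tau_rho_apply hτ hκ, ht, ← zpow_add_apply, show (-1)+t = t-1 by ring]
          rw [h1, hrswap, inv_zpow, ← zpow_neg, show -(1-t) = t-1 by ring]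
        obtain ⟨σ, h1, h2, h3⟩ := step1_core hκ hτ ht' hper' (show 1-t = 2*(-s) by omega)
        exact ⟨σ, h2, h1, by rw [mul_comm]; exact h3⟩
  · exfalso
    apply hcards
    have h1 : (orb τ κ x).filter (fun z => τ z = z) = ∅ := by
      rw [Finset.eq_empty_iff_forall_notMem]
      intro z hz
      simp only [Finset.mem_filter, mem_orb] at hz
      exact (caseB_fix hτ hκ hA hz.1).1 hz.2
    have h2 : (orb τ κ x).filter (fun z => κ z = z) = ∅ := by
      rw [Finset.eq_empty_iff_forall_notMem]
      intro z hz
      simp only [Finset.mem_filter, mem_orb] at hz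
      exact (caseB_fix hτ hκ hA hz.1).2 hz.2
    rw [h1, h2]

end stepone

section stepthreefour

variable {τ κ : Perm (Fin N)} (hτ : τ * τ = 1) (hκ : κ * κ = 1)

include hτ hκ

lemma step3
    (hbad : ∃ B, IsCharBlock τ κ B ∧
      ((B.filter (fun z => τ z = z)).card ≠ (B.filter (fun z => κ z = z)).card)) :
    ¬ (∃ l : Perm (Fin N), l * l = 1 ∧
      (∀ H : Finset (Fin N), IsCharBlock τ κ H → InvSet l H) ∧ l * τ * l⁻¹ = κ) := by
  rintro ⟨l, hl2, hlH, hlc⟩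
  obtain ⟨B, hB, hcards⟩ := hbad
  apply hcards
  have hli : l⁻¹ = l := by rw [inv_eq_iff_mul_eq_one, hl2]
  have hκl : ∀ z, κ (l z) = l (τ z) := by
    intro z
    rw [← hlc]
    simp only [Perm.mul_apply, hli]
    rw [invol_apply hl2]
  have hτeq : τ = l⁻¹ * κ * l := by
    rw [← hlc]; group
  have hτl : ∀ z, τ (l z) = l (κ z) := by
    intro z
    have h5 : τ (l z) = (l⁻¹ * κ * l) (l z) := by rw [← hτeq]
    rw [h5]
    simp only [Perm.mul_apply]
    rw [invol_apply hl2, hli]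
  apply Finset.card_bij (fun z _ => l z)
  · intro z hz
    simp only [Finset.mem_filter] at hz ⊢
    exact ⟨hlH B hB z hz.1, by rw [hκl, hz.2]⟩
  · intro z _ w _ h
    exact l.injective h
  · intro w hw
    simp only [Finset.mem_filter] at hw
    refine ⟨l w, ?_, ?_⟩
    · simp only [Finset.mem_filter]
      exact ⟨hlH B hB w hw.1, by rw [hτl, hw.2]⟩
    · exact invol_apply hl2 w

omit hτ hκ

/-- pick the (unique) π-fixed point in the block of y -/
noncomputable def pickF (τ κ π : Perm (Fin N)) (y : Fin N) : Fin N :=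
  if h : ∃ z, inOrb τ κ y z ∧ π z = z then Classical.choose h else y

lemma pickF_spec {π : Perm (Fin N)} {y : Fin N}
    (h : ∃ z, inOrb τ κ y z ∧ π z = z) :
    inOrb τ κ y (pickF τ κ π y) ∧ π (pickF τ κ π y) = pickF τ κ π y := by
  unfold pickF
  rw [dif_pos h]
  exact Classical.choose_spec h

include hτ hκ

lemma hOdd_of_not_bad
    (hnb : ¬ ∃ B, IsCharBlock τ κ B ∧
      ((B.filter (fun z => τ z = z)).card ≠ (B.filter (fun z => κ z = z)).card)) :
    ∀ y : Fin N, (∃ t : ℤ, τ (basept τ κ y) = ((rho τ κ)^t) (basept τ κ y)) →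
      Odd (per (rho τ κ) (basept τ κ y)) := by
  intro y hA
  obtain ⟨t, ht⟩ := hA
  by_contra heven
  exact hnb ⟨orb τ κ (basept τ κ y), charBlock_orb hτ hκ _,
    caseA_even_cards hτ hκ ht heven⟩

lemma exu_κ_of_fixτ
    (hnb : ¬ ∃ B, IsCharBlock τ κ B ∧
      ((B.filter (fun z => τ z = z)).card ≠ (B.filter (fun z => κ z = z)).card))
    {y : Fin N} (hy : τ y = y) : ∃! z, inOrb τ κ y z ∧ κ z = z := by
  have hxy : inOrb τ κ y (basept τ κ y) := basept_inOrb y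
  obtain ⟨k, hk⟩ : ∃ k : ℤ, basept τ κ y = ((rho τ κ)^k) y := by
    obtain ⟨k, h | h⟩ := hxy
    exacts [⟨k, h⟩, ⟨k, by rwa [hy] at h⟩]
  have htx : τ (basept τ κ y) = ((rho τ κ)^(-2*k)) (basept τ κ y) := by
    rw [hk, tau_rho_apply hτ hκ, hy, ← zpow_add_apply, show -2*k + k = -k by ring]
  have hodd := hOdd_of_not_bad hτ hκ hnb y ⟨-2*k, htx⟩
  obtain ⟨m', hm'⟩ := hodd
  have hdm : (per (rho τ κ) (basept τ κ y) : ℤ) = 2*(m' : ℤ)+1 := by exact_mod_cast hm'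
  obtain ⟨u, hu1, hu2⟩ := oddA_fixκ_unique hτ hκ htx hdm
  refine ⟨u, ⟨inOrb_trans hτ hκ hxy hu1.1, hu1.2⟩, ?_⟩
  rintro z ⟨hz1, hz2⟩
  exact hu2 z ⟨inOrb_trans hτ hκ (inOrb_symm hτ hκ hxy) hz1, hz2⟩

lemma exu_τ_of_fixκ
    (hnb : ¬ ∃ B, IsCharBlock τ κ B ∧
      ((B.filter (fun z => τ z = z)).card ≠ (B.filter (fun z => κ z = z)).card))
    {y : Fin N} (hy : κ y = y) : ∃! z, inOrb τ κ y z ∧ τ z = z := by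
  have hxy : inOrb τ κ y (basept τ κ y) := basept_inOrb y
  have hτy : τ y = (rho τ κ) y := by
    conv_lhs => rw [← hy]
    rfl
  obtain ⟨k, hk⟩ : ∃ k : ℤ, basept τ κ y = ((rho τ κ)^k) y := by
    obtain ⟨k, h | h⟩ := hxy
    · exact ⟨k, h⟩
    · refine ⟨k+1, ?_⟩
      rw [h, hτy, show (rho τ κ) y = ((rho τ κ)^(1:ℤ)) y by simp, ← zpow_add_apply]
  have htx : τ (basept τ κ y) = ((rho τ κ)^(1-2*k)) (basept τ κ y) := by
    rw [hk, tau_rho_apply hτ hκ, hτy,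
      show (rho τ κ) y = ((rho τ κ)^(1:ℤ)) y by simp, ← zpow_add_apply,
      ← zpow_add_apply, show 1-2*k + k = -k + 1 by ring]
  have hodd := hOdd_of_not_bad hτ hκ hnb y ⟨1-2*k, htx⟩
  obtain ⟨m', hm'⟩ := hodd
  have hdm : (per (rho τ κ) (basept τ κ y) : ℤ) = 2*(m' : ℤ)+1 := by exact_mod_cast hm'
  obtain ⟨u, hu1, hu2⟩ := oddA_fixτ_unique hτ hκ htx hdm
  refine ⟨u, ⟨inOrb_trans hτ hκ hxy hu1.1, hu1.2⟩, ?_⟩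
  rintro z ⟨hz1, hz2⟩
  exact hu2 z ⟨inOrb_trans hτ hκ (inOrb_symm hτ hκ hxy) hz1, hz2⟩

lemma inOrb_sigma {σ : Perm (Fin N)} (h1 : Commute σ τ) (h2 : Commute σ κ)
    {y z : Fin N} (h : inOrb τ κ y z) : inOrb τ κ (σ y) (σ z) := by
  have hρ : Commute σ (rho τ κ) := Commute.mul_right h1 h2
  obtain ⟨k, h | h⟩ := h
  · refine ⟨k, Or.inl ?_⟩
    rw [h]
    exact commute_apply (hρ.zpow_right k) y
  · refine ⟨k, Or.inr ?_⟩
    rw [h]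
    rw [commute_apply (hρ.zpow_right k) (τ y), commute_apply h1 y]

lemma step4
    (hnb : ¬ ∃ B, IsCharBlock τ κ B ∧
      ((B.filter (fun z => τ z = z)).card ≠ (B.filter (fun z => κ z = z)).card))
    (σ : Perm (Fin N)) (h1 : Commute σ τ) (h2 : Commute σ κ) :
    Ssign σ τ * Ssign σ κ = 1 := by
  have hexκ : ∀ w : Fin N, τ w = w → ∃ z, inOrb τ κ w z ∧ κ z = z :=
    fun w hw => (exu_κ_of_fixτ hτ hκ hnb hw).exists
  have hexτ : ∀ w : Fin N, κ w = w → ∃ z, inOrb τ κ w z ∧ τ z = z :=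
    fun w hw => (exu_τ_of_fixκ hτ hκ hnb hw).exists
  have hlinv : ∀ (w : Fin N) (hw : τ w = w),
      pickF τ κ τ (pickF τ κ κ w) = w := by
    intro w hw
    have hs := pickF_spec (hexκ w hw)
    exact (exu_τ_of_fixκ hτ hκ hnb hs.2).unique
      (pickF_spec (hexτ _ hs.2)) ⟨inOrb_symm hτ hκ hs.1, hw⟩
  have hrinv : ∀ (w : Fin N) (hw : κ w = w),
      pickF τ κ κ (pickF τ κ τ w) = w := by
    intro w hw
    have hs := pickF_spec (hexτ w hw)
    exact (exu_κ_of_fixτ hτ hκ hnb hs.2).unique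
      (pickF_spec (hexκ _ hs.2)) ⟨inOrb_symm hτ hκ hs.1, hw⟩
  set e : {w : Fin N // τ w = w} ≃ {w : Fin N // κ w = w} :=
    { toFun := fun z => ⟨pickF τ κ κ (z : Fin N), (pickF_spec (hexκ _ z.prop)).2⟩
      invFun := fun z => ⟨pickF τ κ τ (z : Fin N), (pickF_spec (hexτ _ z.prop)).2⟩
      left_inv := fun z => Subtype.ext (hlinv _ z.prop)
      right_inv := fun z => Subtype.ext (hrinv _ z.prop) } with he
  have hkey : ∀ z : Fin N, τ z = z → pickF τ κ κ (σ z) = σ (pickF τ κ κ z) := by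
    intro z hz
    have hspec := pickF_spec (hexκ z hz)
    have hτσz : τ (σ z) = σ z := by
      rw [← commute_apply h1 z, hz]
    apply (exu_κ_of_fixτ hτ hκ hnb hτσz).unique (pickF_spec (hexκ _ hτσz))
    refine ⟨inOrb_sigma hτ hκ h1 h2 hspec.1, ?_⟩
    rw [← commute_apply h2, hspec.2]
  have hperm : σ.subtypePerm (p := fun w => κ w = w) (fix_iff' h2) = e.permCongr (σ.subtypePerm (p := fun w => τ w = w) (fix_iff' h1)) := by
    apply Equiv.ext
    rintro ⟨w, hw⟩
    apply Subtype.ext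
    rw [Equiv.permCongr_apply]
    show σ w = pickF τ κ κ (σ (pickF τ κ τ w))
    have hτp : τ (pickF τ κ τ w) = pickF τ κ τ w := (pickF_spec (hexτ w hw)).2
    rw [hkey _ hτp, hrinv w hw]
  rw [ssign_bridge hτ σ h1, ssign_bridge hκ σ h2, hperm, Perm.sign_permCongr]
  have h3 := Int.units_mul_self (Perm.sign σ * Perm.sign (σ.subtypePerm (p := fun w => τ w = w) (fix_iff' h1)))
  have hcast : (((Perm.sign σ * Perm.sign (σ.subtypePerm (p := fun w => τ w = w) (fix_iff' h1)) : ℤˣ) : ℤ)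
      * ((Perm.sign σ * Perm.sign (σ.subtypePerm (p := fun w => τ w = w) (fix_iff' h1)) : ℤˣ) : ℤ)) = 1 := by
    rw [← Units.val_mul, h3, Units.val_one]
  push_cast at hcast
  linear_combination hcast

end stepthreefour

end Dich

/-- For involutions τ, κ with characteristic partition {H₁,…,H_t}, exactly one
of the following holds: (i) some σ commuting with both satisfies
S(σ,τ)S(σ,κ) = −1; (ii) some involution λ preserving each block H_i conjugates
τ to κ. -/
theorem dichotomy {N : ℕ} (τ κ : Equiv.Perm (Fin N))
    (hτ : τ * τ = 1) (hκ : κ * κ = 1) :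
    Xor'
      (∃ σ : Equiv.Perm (Fin N), Commute σ τ ∧ Commute σ κ ∧
        Ssign σ τ * Ssign σ κ = -1)
      (∃ l : Equiv.Perm (Fin N), l * l = 1 ∧
        (∀ H : Finset (Fin N), IsCharBlock τ κ H → InvSet l H) ∧
        l * τ * l⁻¹ = κ) := by
  classical
  by_cases hbad : ∃ B : Finset (Fin N), IsCharBlock τ κ B ∧
      ((B.filter (fun z => τ z = z)).card ≠ (B.filter (fun z => κ z = z)).card)
  · exact Or.inl ⟨Dich.step1 hτ hκ hbad, Dich.step3 hτ hκ hbad⟩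
  · refine Or.inr ⟨Dich.step2' hτ hκ (Dich.hOdd_of_not_bad hτ hκ hbad), ?_⟩
    rintro ⟨σ, h1, h2, h3⟩
    rw [Dich.step4 hτ hκ hbad σ h1 h2] at h3
    norm_num at h3
end

section
/- Let τ, κ be involutions in Σ_N and suppose there exists an involution λ ∈ Σ_N with λτλ⁻¹ = κ that preserves every block of the characteristic partition of (τ,κ). Then for every σ ∈ Σ_N commuting with both τ and κ, S(σ,τ) = S(σ,κ), where S(σ,τ) = (−1)^{#{ {a,b} : a<b, τ(a)=b, σ(a)>σ(b) }}. -/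
open Equiv Finset

namespace SsignAux

variable {N : ℕ}

lemma comm_apply {σ τ : Perm (Fin N)} (hc : Commute σ τ) (x : Fin N) : σ (τ x) = τ (σ x) := by
  have := congrArg (fun π : Perm (Fin N) => π x) hc.eq
  simpa using this

lemma apply_apply_self {τ : Perm (Fin N)} (hτ : τ * τ = 1) (x : Fin N) : τ (τ x) = x := by
  have := congrArg (fun π : Perm (Fin N) => π x) hτ
  simpa using this

lemma fix_iff {σ τ : Perm (Fin N)} (hc : Commute σ τ) : ∀ x, τ x = x ↔ τ (σ x) = σ x := by
  intro x
  constructor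
  · intro h; rw [← comm_apply hc, h]
  · intro h; rw [← comm_apply hc] at h; exact σ.injective h

lemma sign_eq_sign_subtypePerm (τ : Perm (Fin N)) (hτ : τ * τ = 1) :
    ∀ n : ℕ, ∀ σ : Perm (Fin N),
      (univ.filter fun x => σ x ≠ x ∧ τ x ≠ x).card = n →
      ∀ _hc : Commute σ τ,
      (∀ a, τ a ≠ a → a < τ a → σ a < σ (τ a)) →
      ∀ h₁ : ∀ x, τ x = x ↔ τ (σ x) = σ x,
      Equiv.Perm.sign σ = Equiv.Perm.sign (σ.subtypePerm (p := fun x => τ x = x) (fun x => (h₁ x).symm)) := by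
  intro n
  induction n using Nat.strong_induction_on with
  | _ n IH =>
  intro σ hcard hc hr h₁
  rcases Nat.eq_zero_or_pos n with hn | hn
  · -- base case: σ is supported on fixed points of τ
    have hempty : (univ.filter fun x => σ x ≠ x ∧ τ x ≠ x) = ∅ :=
      card_eq_zero.mp (by rw [hcard, hn])
    have h₂ : ∀ x, σ x ≠ x → τ x = x := by
      intro x hx
      by_contra hτx
      have : x ∈ (univ.filter fun x => σ x ≠ x ∧ τ x ≠ x) :=
        mem_filter.mpr ⟨mem_univ x, hx, hτx⟩
      rw [hempty] at this
      exact absurd this (notMem_empty x)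
    exact (Equiv.Perm.sign_subtypePerm σ (p := fun x => τ x = x) (fun x => (h₁ x).symm) h₂).symm
  · -- inductive step
    obtain ⟨a₀, ha₀⟩ := card_pos.mp (hcard ▸ hn)
    rw [mem_filter] at ha₀
    obtain ⟨-, hσa₀, hτa₀⟩ := ha₀
    obtain ⟨a, hlt, hσa⟩ : ∃ a, a < τ a ∧ σ a ≠ a := by
      rcases lt_or_gt_of_ne (Ne.symm hτa₀) with h | h
      · exact ⟨a₀, h, hσa₀⟩
      · refine ⟨τ a₀, ?_, ?_⟩
        · rw [apply_apply_self hτ]; exact h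
        · intro hfix
          rw [comm_apply hc] at hfix
          exact hσa₀ (τ.injective hfix)
    set b := τ a with hb
    have hτa_ne : τ a ≠ a := (ne_of_lt hlt).symm
    have hab : a ≠ b := ne_of_lt hlt
    have hτb : τ b = a := apply_apply_self hτ a
    have hτb_ne : τ b ≠ b := by rw [hτb]; exact hab
    have hσb_eq : σ b = τ (σ a) := comm_apply hc a
    have hσab : σ a < σ b := hr a hτa_ne hlt
    have hσb : σ b ≠ b := by
      intro h
      exact hσa (τ.injective (by rw [← hσb_eq, h, hb]))
    have hσa_ne_b : σ a ≠ b := by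
      intro h
      have h2 : σ b = a := by rw [hσb_eq, h, hτb]
      rw [h, h2] at hσab
      exact absurd hσab (lt_asymm hlt)
    have hσb_ne_a : σ b ≠ a := by
      intro h
      have h4 : τ (σ a) = a := by rw [← hσb_eq]; exact h
      have h5 := congrArg τ h4
      rw [apply_apply_self hτ] at h5
      exact hσa_ne_b (by rw [h5, ← hb])
    have hσaσb : σ a ≠ σ b := fun h => hab (σ.injective h)
    -- the correcting even permutation ρ
    set s1 := Equiv.swap a (σ a) with hs1
    set s2 := Equiv.swap b (σ b) with hs2
    set ρ := s1 * s2 with hρdef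
    have hdisj : Equiv.Perm.Disjoint s1 s2 := by
      intro x
      by_cases h1 : x = a
      · right; subst h1; exact swap_apply_of_ne_of_ne hab (Ne.symm hσb_ne_a)
      · by_cases h2 : x = σ a
        · right; subst h2; exact swap_apply_of_ne_of_ne hσa_ne_b hσaσb
        · left; exact swap_apply_of_ne_of_ne h1 h2
    have hτσa : τ (σ a) = σ b := hσb_eq.symm
    have hτσb : τ (σ b) = σ a := by rw [hσb_eq, apply_apply_self hτ]
    have hτinv : τ⁻¹ = τ := inv_eq_of_mul_eq_one_right hτ
    have c1 : τ * s1 * τ⁻¹ = s2 := by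
      rw [← swap_apply_apply τ a (σ a), hτσa, ← hb]
    have c2 : τ * s2 * τ⁻¹ = s1 := by
      rw [← swap_apply_apply τ b (σ b), hτσb, hτb]
    have hρτ : Commute ρ τ := by
      have h3 : τ * ρ * τ⁻¹ = ρ := by
        calc τ * (s1 * s2) * τ⁻¹ = (τ * s1 * τ⁻¹) * (τ * s2 * τ⁻¹) := by
              rw [hτinv]; simp only [mul_assoc, mul_one]
              rw [← mul_assoc τ τ, hτ, one_mul]
          _ = s2 * s1 := by rw [c1, c2]
          _ = s1 * s2 := (hdisj.commute.eq).symm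
      have h4 : τ * ρ = ρ * τ := by
        have := congrArg (fun z => z * τ) h3
        simpa [mul_assoc, hτinv, hτ] using this
      exact h4.symm
    -- applications of ρ
    have hρa : ρ a = σ a := by
      show s1 (s2 a) = σ a
      rw [hs2, swap_apply_of_ne_of_ne hab (Ne.symm hσb_ne_a), hs1, swap_apply_left]
    have hρσa : ρ (σ a) = a := by
      show s1 (s2 (σ a)) = a
      rw [hs2, swap_apply_of_ne_of_ne hσa_ne_b hσaσb, hs1, swap_apply_right]
    have hρb : ρ b = σ b := by
      show s1 (s2 b) = σ b
      rw [hs2, swap_apply_left, hs1,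
        swap_apply_of_ne_of_ne hσb_ne_a (fun h => hab (σ.injective h).symm)]
    have hρσb : ρ (σ b) = b := by
      show s1 (s2 (σ b)) = b
      rw [hs2, swap_apply_right, hs1, swap_apply_of_ne_of_ne hab.symm (Ne.symm hσa_ne_b)]
    have hρfix : ∀ x, x ≠ a → x ≠ b → x ≠ σ a → x ≠ σ b → ρ x = x := by
      intro x k1 k2 k3 k4
      show s1 (s2 x) = x
      rw [hs2, swap_apply_of_ne_of_ne k2 k4, hs1, swap_apply_of_ne_of_ne k1 k3]
    set σ'' := ρ * σ with hσ''
    have happ : ∀ x, σ'' x = ρ (σ x) := fun x => rfl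
    have hc'' : Commute σ'' τ := hρτ.mul_left hc
    -- fixed points of σ stay fixed
    have hfixρ : ∀ x, σ x = x → σ'' x = x := by
      intro x hx
      have k1 : x ≠ a := fun h => hσa (by rw [← h]; exact hx)
      have k2 : x ≠ b := fun h => hσb (by rw [← h]; exact hx)
      have k3 : x ≠ σ a := by
        intro h
        have : σ (σ a) = σ a := by rw [← h]; exact hx
        exact hσa (σ.injective this)
      have k4 : x ≠ σ b := by
        intro h
        have : σ (σ b) = σ b := by rw [← h]; exact hx
        exact hσb (σ.injective this)
      rw [happ, hx, hρfix x k1 k2 k3 k4]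
    have hsub : (univ.filter fun x => σ'' x ≠ x ∧ τ x ≠ x)
        ⊆ (univ.filter fun x => σ x ≠ x ∧ τ x ≠ x) := by
      intro x hx
      rw [mem_filter] at hx ⊢
      refine ⟨mem_univ x, fun hσx => hx.2.1 (hfixρ x hσx), hx.2.2⟩
    have hanot : a ∉ (univ.filter fun x => σ'' x ≠ x ∧ τ x ≠ x) := by
      rw [mem_filter]
      push_neg
      intro _ h
      exact absurd (by rw [happ, hρσa]) h
    have hamem : a ∈ (univ.filter fun x => σ x ≠ x ∧ τ x ≠ x) :=
      mem_filter.mpr ⟨mem_univ a, hσa, hτa_ne⟩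
    have hcard'' : (univ.filter fun x => σ'' x ≠ x ∧ τ x ≠ x).card < n := by
      rw [← hcard]
      exact card_lt_card ⟨hsub, fun hsup => hanot (hsup hamem)⟩
    -- orientation is preserved
    have hr'' : ∀ c, τ c ≠ c → c < τ c → σ'' c < σ'' (τ c) := by
      intro c hτc hcd
      have hσd : σ (τ c) = τ (σ c) := comm_apply hc c
      rw [happ, happ]
      by_cases h1 : σ c = a
      · have h2 : σ (τ c) = b := by rw [hσd, h1, ← hb]
        rw [h1, h2, hρa, hρb]; exact hσab
      · by_cases h2 : σ c = b
        · exfalso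
          have := hr c hτc hcd
          rw [h2, hσd, h2, hτb] at this
          exact absurd hlt (lt_asymm this)
        · by_cases h3 : σ c = σ a
          · have hca : c = a := σ.injective h3
            have h4 : σ (τ c) = σ b := by rw [hca]
            rw [h3, h4, hρσa, hρσb]; exact hlt
          · by_cases h4 : σ c = σ b
            · exfalso
              have hcb : c = b := σ.injective h4
              rw [hcb, hτb] at hcd
              exact absurd hlt (lt_asymm hcd)
            · have k1 : σ (τ c) ≠ a := by
                intro h
                apply h2
                apply τ.injective
                rw [← hσd, h, hτb]
              have k2 : σ (τ c) ≠ b := by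
                intro h
                apply h1
                apply τ.injective
                rw [← hσd, h, ← hb]
              have k3 : σ (τ c) ≠ σ a := by
                intro h
                have hca : τ c = a := σ.injective h
                have h6 := congrArg τ hca
                rw [apply_apply_self hτ] at h6
                exact h4 (by rw [h6, ← hb])
              have k4 : σ (τ c) ≠ σ b := by
                intro h
                have hcb : τ c = b := σ.injective h
                have h6 := congrArg τ hcb
                rw [apply_apply_self hτ, hτb] at h6
                exact h3 (by rw [h6])
              rw [hρfix _ h1 h2 h3 h4, hρfix _ k1 k2 k3 k4]
              exact hr c hτc hcd
    have hIH := IH _ hcard'' σ'' rfl hc'' hr'' (fun x => by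
      constructor
      · intro h
        rw [← comm_apply hc'', h]
      · intro h
        rw [← comm_apply hc''] at h
        exact σ''.injective h)
    have hρ_sign : Equiv.Perm.sign ρ = 1 := by
      rw [hρdef, map_mul, hs1, hs2, Equiv.Perm.sign_swap (Ne.symm hσa),
        Equiv.Perm.sign_swap (Ne.symm hσb)]
      norm_num
    have hsign'' : Equiv.Perm.sign σ'' = Equiv.Perm.sign σ := by
      rw [hσ'', map_mul, hρ_sign, one_mul]
    have hsub_eq : σ''.subtypePerm (p := fun x => τ x = x) (fun x => ((fix_iff hc'') x).symm)
        = σ.subtypePerm (p := fun x => τ x = x) (fun x => (h₁ x).symm) := by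
      apply Equiv.ext
      rintro ⟨x, hx⟩
      apply Subtype.ext
      show σ'' x = σ x
      have hfx : τ (σ x) = σ x := (h₁ x).mp hx
      have k1 : σ x ≠ a := fun h => hτa_ne (by rw [← h]; exact hfx)
      have k2 : σ x ≠ b := fun h => hτb_ne (by rw [← h]; exact hfx)
      have k3 : σ x ≠ σ a := fun h => hτa_ne (by rw [← σ.injective h]; exact hx)
      have k4 : σ x ≠ σ b := fun h => hτb_ne (by rw [← σ.injective h]; exact hx)
      rw [happ, hρfix _ k1 k2 k3 k4]
    rw [← hsign'', hIH, hsub_eq]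

lemma ssign_eq_sign_mul (τ : Perm (Fin N)) (hτ : τ * τ = 1) :
    ∀ n : ℕ, ∀ σ : Perm (Fin N),
      (Finset.univ.filter (fun p : Fin N × Fin N =>
        p.1 < p.2 ∧ τ p.1 = p.2 ∧ σ p.2 < σ p.1)).card = n →
      ∀ _hc : Commute σ τ, ∀ h₁ : ∀ x, τ x = x ↔ τ (σ x) = σ x,
      Ssign σ τ = ((Equiv.Perm.sign σ : ℤ) * ((Equiv.Perm.sign (σ.subtypePerm (p := fun x => τ x = x) (fun x => (h₁ x).symm))) : ℤ)) := by
  intro n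
  induction n using Nat.strong_induction_on with
  | _ n IH =>
  intro σ hcard hc h₁
  rcases Nat.eq_zero_or_pos n with hn | hn
  · -- base case: no reversed pairs
    have hempty : (Finset.univ.filter (fun p : Fin N × Fin N =>
        p.1 < p.2 ∧ τ p.1 = p.2 ∧ σ p.2 < σ p.1)) = ∅ :=
      card_eq_zero.mp (by rw [hcard, hn])
    have hr : ∀ a, τ a ≠ a → a < τ a → σ a < σ (τ a) := by
      intro a hτa hlt
      have hnot : ((a, τ a) : Fin N × Fin N) ∉ (Finset.univ.filter (fun p : Fin N × Fin N =>
          p.1 < p.2 ∧ τ p.1 = p.2 ∧ σ p.2 < σ p.1)) := by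
        rw [hempty]; exact notMem_empty _
      have hle : ¬ (σ (τ a) < σ a) := fun hlt' =>
        hnot (mem_filter.mpr ⟨mem_univ _, hlt, rfl, hlt'⟩)
      rcases lt_or_eq_of_le (not_lt.mp hle) with h | h
      · exact h
      · exact absurd (σ.injective h).symm hτa
    have hsgn := sign_eq_sign_subtypePerm τ hτ _ σ rfl hc hr h₁
    have hone : Ssign σ τ = 1 := by
      show (-1 : ℤ) ^ _ = 1
      rw [hcard, hn, pow_zero]
    rw [hone, ← hsgn]
    rcases Int.units_eq_one_or (Equiv.Perm.sign σ) with h | h <;> rw [h] <;> norm_num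
  · -- inductive step: remove one reversed pair
    obtain ⟨⟨a, b⟩, hp⟩ := card_pos.mp (hcard ▸ hn)
    simp only [mem_filter, mem_univ, true_and] at hp
    obtain ⟨hab, hτab, hrev⟩ := hp
    have haneb : a ≠ b := ne_of_lt hab
    have hτa_ne : τ a ≠ a := by rw [hτab]; exact haneb.symm
    have hτb : τ b = a := by rw [← hτab, apply_apply_self hτ]
    have hτb_ne : τ b ≠ b := by rw [hτb]; exact haneb
    have hσab_ne : σ a ≠ σ b := fun h => haneb (σ.injective h)
    have hτσa : τ (σ a) = σ b := by rw [← comm_apply hc, hτab]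
    have hτσb : τ (σ b) = σ a := by rw [← comm_apply hc, hτb]
    have hτinv : τ⁻¹ = τ := inv_eq_of_mul_eq_one_right hτ
    have hsτ : Commute (Equiv.swap (σ a) (σ b)) τ := by
      have h5 : τ * Equiv.swap (σ a) (σ b) * τ⁻¹ = Equiv.swap (σ a) (σ b) := by
        rw [← swap_apply_apply τ (σ a) (σ b), hτσa, hτσb, swap_comm]
      have h6 : τ * Equiv.swap (σ a) (σ b) = Equiv.swap (σ a) (σ b) * τ := by
        have := congrArg (fun z => z * τ) h5
        simpa [mul_assoc, hτinv, hτ] using this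
      exact h6.symm
    set σ' := Equiv.swap (σ a) (σ b) * σ with hσ'
    have happ : ∀ x, σ' x = Equiv.swap (σ a) (σ b) (σ x) := fun x => rfl
    have hc' : Commute σ' τ := hsτ.mul_left hc
    have hσ'a : σ' a = σ b := by rw [happ, swap_apply_left]
    have hσ'b : σ' b = σ a := by rw [happ, swap_apply_right]
    -- the new reversed set is the old one minus (a,b)
    have hset : (Finset.univ.filter (fun p : Fin N × Fin N =>
          p.1 < p.2 ∧ τ p.1 = p.2 ∧ σ' p.2 < σ' p.1))
        = (Finset.univ.filter (fun p : Fin N × Fin N =>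
          p.1 < p.2 ∧ τ p.1 = p.2 ∧ σ p.2 < σ p.1)).erase (a, b) := by
      ext ⟨c, d⟩
      simp only [mem_erase, mem_filter, mem_univ, true_and]
      constructor
      · rintro ⟨hcd, hτcd, hrev'⟩
        by_cases hca : c = a
        · exfalso
          have hdb : d = b := by rw [← hτcd, hca, hτab]
          rw [hca, hdb, hσ'a, hσ'b] at hrev'
          exact absurd hrev (lt_asymm hrev')
        · have hcb : c ≠ b := by
            intro h
            rw [h, hτb] at hτcd
            rw [h, ← hτcd] at hcd
            exact absurd hab (lt_asymm hcd)
          have hda : d ≠ a := by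
            intro h
            apply hcb
            apply τ.injective
            rw [hτcd, h, hτb]
          have hdb : d ≠ b := by
            intro h
            apply hca
            apply τ.injective
            rw [hτcd, h, hτab]
          have e1 : σ' c = σ c := by
            rw [happ, swap_apply_of_ne_of_ne (fun h => hca (σ.injective h))
              (fun h => hcb (σ.injective h))]
          have e2 : σ' d = σ d := by
            rw [happ, swap_apply_of_ne_of_ne (fun h => hda (σ.injective h))
              (fun h => hdb (σ.injective h))]
          rw [e1, e2] at hrev'
          refine ⟨?_, hcd, hτcd, hrev'⟩
          intro h
          rw [Prod.mk.injEq] at h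
          exact hca h.1
      · rintro ⟨hne, hcd, hτcd, hrev'⟩
        have hca : c ≠ a := by
          intro h
          apply hne
          rw [Prod.mk.injEq]
          exact ⟨h, by rw [← hτcd, h, hτab]⟩
        have hcb : c ≠ b := by
          intro h
          rw [h, hτb] at hτcd
          rw [h, ← hτcd] at hcd
          exact absurd hab (lt_asymm hcd)
        have hda : d ≠ a := by
          intro h
          apply hcb
          apply τ.injective
          rw [hτcd, h, hτb]
        have hdb : d ≠ b := by
          intro h
          apply hca
          apply τ.injective
          rw [hτcd, h, hτab]
        have e1 : σ' c = σ c := by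
          rw [happ, swap_apply_of_ne_of_ne (fun h => hca (σ.injective h))
            (fun h => hcb (σ.injective h))]
        have e2 : σ' d = σ d := by
          rw [happ, swap_apply_of_ne_of_ne (fun h => hda (σ.injective h))
            (fun h => hdb (σ.injective h))]
        rw [← e1, ← e2] at hrev'
        exact ⟨hcd, hτcd, hrev'⟩
    have hmem : ((a, b) : Fin N × Fin N) ∈ (Finset.univ.filter (fun p : Fin N × Fin N =>
        p.1 < p.2 ∧ τ p.1 = p.2 ∧ σ p.2 < σ p.1)) :=
      mem_filter.mpr ⟨mem_univ _, hab, hτab, hrev⟩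
    have hcard' : (Finset.univ.filter (fun p : Fin N × Fin N =>
        p.1 < p.2 ∧ τ p.1 = p.2 ∧ σ' p.2 < σ' p.1)).card = n - 1 := by
      rw [hset, card_erase_of_mem hmem, hcard]
    have hIH := IH (n - 1) (Nat.sub_lt hn one_pos) σ' hcard' hc' (fun x => by
      constructor
      · intro h
        rw [← comm_apply hc', h]
      · intro h
        rw [← comm_apply hc'] at h
        exact σ'.injective h)
    -- signs
    have hsign' : Equiv.Perm.sign σ' = - Equiv.Perm.sign σ := by
      rw [hσ', map_mul, Equiv.Perm.sign_swap hσab_ne, neg_one_mul]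
    have hsub_eq : σ'.subtypePerm (p := fun x => τ x = x) (fun x => ((fix_iff hc') x).symm)
        = σ.subtypePerm (p := fun x => τ x = x) (fun x => (h₁ x).symm) := by
      apply Equiv.ext
      rintro ⟨x, hx⟩
      apply Subtype.ext
      show σ' x = σ x
      have k1 : σ x ≠ σ a := fun h => hτa_ne (by rw [← σ.injective h]; exact hx)
      have k2 : σ x ≠ σ b := fun h => hτb_ne (by rw [← σ.injective h]; exact hx)
      rw [happ, swap_apply_of_ne_of_ne k1 k2]
    have hS : Ssign σ τ = - Ssign σ' τ := by
      show (-1 : ℤ) ^ _ = - ((-1 : ℤ) ^ _)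
      rw [hcard, hcard']
      obtain ⟨m, rfl⟩ : ∃ m, n = m + 1 := ⟨n - 1, (Nat.succ_pred_eq_of_pos hn).symm⟩
      simp [pow_succ]
    rw [hS, hIH, hsub_eq, hsign']
    push_cast
    ring

/-- conjugation of powers by an involution inverting ρ -/
lemma conj_pow_eq {g ρ : Perm (Fin N)} (hg : g * g = 1) (hbase : g * ρ * g = ρ⁻¹) (k : ℕ) :
    g * ρ ^ k * g = (ρ ^ k)⁻¹ := by
  have hginv : g⁻¹ = g := inv_eq_of_mul_eq_one_right hg
  calc g * ρ ^ k * g = g * ρ ^ k * g⁻¹ := by rw [hginv]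
    _ = (g * ρ * g⁻¹) ^ k := conj_pow.symm
    _ = (ρ⁻¹) ^ k := by rw [hginv, hbase]
    _ = (ρ ^ k)⁻¹ := inv_pow ρ k

lemma conj_pow_apply {g ρ : Perm (Fin N)} (hg : g * g = 1) (hbase : g * ρ * g = ρ⁻¹) (k : ℕ)
    (y : Fin N) : g ((ρ ^ k) y) = (ρ ^ k)⁻¹ (g y) := by
  have h1 : g * ρ ^ k = (ρ ^ k)⁻¹ * g := by
    have := congrArg (fun z => z * g) (conj_pow_eq hg hbase k)
    simpa [mul_assoc, hg] using this
  have := congrArg (fun π : Perm (Fin N) => π y) h1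
  simpa using this

lemma period_transport (ρ g : Perm (Fin N)) (hg : Commute g ρ) (x : Fin N) :
    Function.minimalPeriod ⇑ρ (g x) = Function.minimalPeriod ⇑ρ x := by
  have key : ∀ k : ℕ, (ρ ^ k) (g x) = g x ↔ (ρ ^ k) x = x := by
    intro k
    have hcg : (ρ ^ k) (g x) = g ((ρ ^ k) x) := by
      have := congrArg (fun π : Perm (Fin N) => π x) (hg.pow_right k).eq
      simpa using this.symm
    rw [hcg]
    exact ⟨fun h => g.injective h, fun h => by rw [h]⟩
  apply Nat.dvd_antisymm
  · apply Function.IsPeriodicPt.minimalPeriod_dvd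
    show (⇑ρ)^[Function.minimalPeriod ⇑ρ x] (g x) = g x
    rw [Equiv.Perm.iterate_eq_pow]
    refine (key _).mpr ?_
    have := Function.isPeriodicPt_minimalPeriod ⇑ρ x
    rwa [Function.IsPeriodicPt, Function.IsFixedPt, Equiv.Perm.iterate_eq_pow] at this
  · apply Function.IsPeriodicPt.minimalPeriod_dvd
    show (⇑ρ)^[Function.minimalPeriod ⇑ρ (g x)] x = x
    rw [Equiv.Perm.iterate_eq_pow]
    refine (key _).mp ?_
    have := Function.isPeriodicPt_minimalPeriod ⇑ρ (g x)
    rwa [Function.IsPeriodicPt, Function.IsFixedPt, Equiv.Perm.iterate_eq_pow] at this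

lemma odd_minimalPeriod (τ κ l : Perm (Fin N))
    (hτ : τ * τ = 1) (hκ : κ * κ = 1) (hl : l * l = 1)
    (hlblk : ∀ H : Finset (Fin N), IsCharBlock τ κ H → InvSet l H)
    (hconj : l * τ * l⁻¹ = κ) (x : Fin N) (hx : τ x = x) :
    Odd (Function.minimalPeriod ⇑(κ * τ) x) := by
  have hτinv : τ⁻¹ = τ := inv_eq_of_mul_eq_one_right hτ
  have hκinv : κ⁻¹ = κ := inv_eq_of_mul_eq_one_right hκ
  have hbaseτ : τ * (κ * τ) * τ = (κ * τ)⁻¹ := by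
    rw [mul_inv_rev, hτinv, hκinv]
    calc τ * (κ * τ) * τ = τ * κ * (τ * τ) := by simp only [mul_assoc]
      _ = τ * κ := by rw [hτ, mul_one]
  have hbaseκ : κ * (κ * τ) * κ = (κ * τ)⁻¹ := by
    rw [mul_inv_rev, hτinv, hκinv]
    calc κ * (κ * τ) * κ = (κ * κ) * (τ * κ) := by simp only [mul_assoc]
      _ = τ * κ := by rw [hκ, one_mul]
  set ρ := κ * τ with hρ
  have hκx : κ x = ρ x := by
    show κ x = (κ * τ) x
    simp [Perm.mul_apply, hx]
  set o := orderOf ρ with ho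
  have hopos : 0 < o := orderOf_pos ρ
  obtain ⟨o', hoeq⟩ : ∃ o', o = o' + 1 := ⟨o - 1, (Nat.succ_pred_eq_of_pos hopos).symm⟩
  have hρo : ρ ^ o = 1 := pow_orderOf_eq_one ρ
  have hpowinv : ∀ k : ℕ, ((ρ ^ k)⁻¹ : Perm (Fin N)) = ρ ^ (k * (o - 1)) := by
    intro k
    symm
    apply eq_inv_of_mul_eq_one_left
    rw [← pow_add]
    have : k * (o - 1) + k = o * k := by
      rw [hoeq, Nat.add_sub_cancel]; ring
    rw [this, pow_mul, hρo, one_pow]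
  set H := (Finset.range o).image (fun k => (ρ ^ k) x) with hH
  have hmemH : ∀ k : ℕ, (ρ ^ k) x ∈ H := by
    intro k
    rw [hH, mem_image]
    exact ⟨k % o, mem_range.mpr (Nat.mod_lt _ hopos), by rw [pow_mod_orderOf]⟩
  have hxH : x ∈ H := by
    have := hmemH 0
    rwa [pow_zero, Perm.one_apply] at this
  have hτH : InvSet τ H := by
    intro y hy
    rw [hH, mem_image] at hy
    obtain ⟨k, -, rfl⟩ := hy
    rw [conj_pow_apply hτ hbaseτ k x, hx, hpowinv]
    exact hmemH _
  have hκH : InvSet κ H := by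
    intro y hy
    rw [hH, mem_image] at hy
    obtain ⟨k, -, rfl⟩ := hy
    rw [conj_pow_apply hκ hbaseκ k x, hκx, hpowinv, ← Perm.mul_apply, ← pow_succ]
    exact hmemH _
  have hmin : ∀ K ⊆ H, K.Nonempty → InvSet τ K → InvSet κ K → K = H := by
    intro K hKH ⟨y, hy⟩ hKτ hKκ
    have hKρ : ∀ j : ℕ, ∀ z ∈ K, (ρ ^ j) z ∈ K := by
      intro j
      induction j with
      | zero => intro z hz; simpa using hz
      | succ j ih =>
        intro z hz
        have h2 : (ρ ^ (j + 1)) z = ρ ((ρ ^ j) z) := by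
          rw [pow_succ', Perm.mul_apply]
        rw [h2]
        exact hKκ _ (hKτ _ (ih z hz))
    have hyH := hKH hy
    rw [hH, mem_image] at hyH
    obtain ⟨k, -, hky⟩ := hyH
    have hxK : x ∈ K := by
      have h3 := hKρ (k * (o - 1)) y hy
      rw [← hky, ← Perm.mul_apply, ← pow_add] at h3
      have h4 : k * (o - 1) + k = o * k := by
        rw [hoeq, Nat.add_sub_cancel]; ring
      rwa [h4, pow_mul, hρo, one_pow, Perm.one_apply] at h3
    apply Finset.Subset.antisymm hKH
    intro z hz
    rw [hH, mem_image] at hz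
    obtain ⟨k', -, rfl⟩ := hz
    exact hKρ k' x hxK
  have hblk : IsCharBlock τ κ H := ⟨⟨x, hxH⟩, hτH, hκH, hmin⟩
  have hlxH : l x ∈ H := hlblk H hblk x hxH
  rw [hH, mem_image] at hlxH
  obtain ⟨m, -, hmx⟩ := hlxH
  have hκlx : κ (l x) = l x := by
    rw [← hconj]
    simp [Perm.mul_apply, hx]
  have hκm : κ ((ρ ^ m) x) = (ρ ^ m) x := by rw [hmx]; exact hκlx
  -- derive ρ^(m+m) x = ρ x
  have e2 : (ρ ^ m)⁻¹ (κ x) = (ρ ^ m) x := by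
    rw [← conj_pow_apply hκ hbaseκ m x]
    exact hκm
  have e3 : κ x = (ρ ^ m) ((ρ ^ m) x) := by
    have := congrArg (⇑(ρ ^ m)) e2
    rwa [Perm.inv_def, Equiv.apply_symm_apply] at this
  have h2m : (ρ ^ (m + m)) x = ρ x := by
    rw [pow_add, Perm.mul_apply, ← e3, hκx]
  set n := Function.minimalPeriod ⇑ρ x with hn
  have hnpos : 0 < n := by
    apply Function.minimalPeriod_pos_of_mem_periodicPts
    apply Function.mk_mem_periodicPts hopos
    show (⇑ρ)^[o] x = x
    rw [Equiv.Perm.iterate_eq_pow, hρo, Perm.one_apply]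
  have hnper : (ρ ^ n) x = x := by
    have := Function.isPeriodicPt_minimalPeriod ⇑ρ x
    rwa [Function.IsPeriodicPt, Function.IsFixedPt, Equiv.Perm.iterate_eq_pow] at this
  have hdvd : n ∣ (n - 1) + (m + m) := by
    apply Function.IsPeriodicPt.minimalPeriod_dvd
    show (⇑ρ)^[(n - 1) + (m + m)] x = x
    have hn1 : n - 1 + 1 = n := by omega
    rw [Equiv.Perm.iterate_eq_pow, pow_add, Perm.mul_apply, h2m, ← Perm.mul_apply, ← pow_succ,
      hn1, hnper]
  rcases Nat.even_or_odd n with he | hodd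
  · exfalso
    have h2k : (2 : ℕ) ∣ (n - 1) + (m + m) := dvd_trans he.two_dvd hdvd
    have hoddk : Odd ((n - 1) + (m + m)) :=
      (Nat.Even.sub_odd hnpos he odd_one).add_even (Even.add_self m)
    rw [Nat.odd_iff] at hoddk
    omega
  · exact hodd

lemma kappa_fix_half (τ κ : Perm (Fin N)) (hτ : τ * τ = 1) (hκ : κ * κ = 1)
    (x : Fin N) (hx : τ x = x) (hodd : Odd (Function.minimalPeriod ⇑(κ * τ) x)) :
    κ (((κ * τ) ^ ((Function.minimalPeriod ⇑(κ * τ) x + 1) / 2)) x)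
      = ((κ * τ) ^ ((Function.minimalPeriod ⇑(κ * τ) x + 1) / 2)) x := by
  have hτinv : τ⁻¹ = τ := inv_eq_of_mul_eq_one_right hτ
  have hκinv : κ⁻¹ = κ := inv_eq_of_mul_eq_one_right hκ
  have hbaseκ : κ * (κ * τ) * κ = (κ * τ)⁻¹ := by
    rw [mul_inv_rev, hτinv, hκinv]
    calc κ * (κ * τ) * κ = (κ * κ) * (τ * κ) := by simp only [mul_assoc]
      _ = τ * κ := by rw [hκ, one_mul]
  set ρ := κ * τ with hρ
  set n := Function.minimalPeriod ⇑ρ x with hn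
  set h := (n + 1) / 2 with hh
  have hκx : κ x = ρ x := by
    show κ x = (κ * τ) x
    simp [Perm.mul_apply, hx]
  have h2h : h + h = n + 1 := by
    obtain ⟨t, ht⟩ := hodd
    omega
  have hnpos : 0 < n := by
    obtain ⟨t, ht⟩ := hodd
    omega
  have hnper : (ρ ^ n) x = x := by
    have := Function.isPeriodicPt_minimalPeriod ⇑ρ x
    rwa [Function.IsPeriodicPt, Function.IsFixedPt, Equiv.Perm.iterate_eq_pow] at this
  have e1 : (ρ ^ (h + h)) x = ρ x := by
    rw [h2h, pow_succ', Perm.mul_apply, hnper]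
  have e2 : (ρ ^ h) ((ρ ^ h) x) = κ x := by
    rw [← Perm.mul_apply, ← pow_add, e1, hκx]
  apply (ρ ^ h).injective
  rw [conj_pow_apply hκ hbaseκ h x, Perm.inv_def, Equiv.apply_symm_apply, e2]

end SsignAux

open SsignAux in
/-- If an involution λ preserving every block of the characteristic partition of
(τ,κ) conjugates τ to κ, then S(σ,τ) = S(σ,κ) for every σ commuting with both. -/
theorem Ssign_eq_of_block_conj {N : ℕ} (τ κ : Equiv.Perm (Fin N))
    (hτ : τ * τ = 1) (hκ : κ * κ = 1)
    (l : Equiv.Perm (Fin N)) (hl : l * l = 1)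
    (hlblk : ∀ H : Finset (Fin N), IsCharBlock τ κ H → InvSet l H)
    (hconj : l * τ * l⁻¹ = κ) :
    ∀ σ : Equiv.Perm (Fin N), Commute σ τ → Commute σ κ →
      Ssign σ τ = Ssign σ κ := by
  intro σ hστ hσκ
  have h₁τ : ∀ x, τ x = x ↔ τ (σ x) = σ x := fix_iff hστ
  have h₁κ : ∀ x, κ x = x ↔ κ (σ x) = σ x := fix_iff hσκ
  rw [ssign_eq_sign_mul τ hτ _ σ rfl hστ h₁τ, ssign_eq_sign_mul κ hκ _ σ rfl hσκ h₁κ]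
  suffices hsgn : Equiv.Perm.sign (σ.subtypePerm (p := fun x => τ x = x) (fun x => (h₁τ x).symm)) = Equiv.Perm.sign (σ.subtypePerm (p := fun x => κ x = x) (fun x => (h₁κ x).symm)) by
    rw [hsgn]
  have hlinv : l⁻¹ = l := inv_eq_of_mul_eq_one_right hl
  have hll : ∀ w, l (l w) = w := apply_apply_self hl
  have hκl : ∀ w, τ w = w → κ (l w) = l w := by
    intro w hw
    rw [← hconj]
    simp [Perm.mul_apply, hw]
  have hτeq : τ = l⁻¹ * κ * l := by
    rw [← hconj]
    group
  have hτl : ∀ w, κ w = w → τ (l w) = l w := by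
    intro w hw
    have h5 := congrArg (fun π : Perm (Fin N) => π (l w)) hτeq
    simp only [Perm.mul_apply] at h5
    rw [h5, hll, hw, hlinv]
  have hcards : Fintype.card {y // τ y = y} = Fintype.card {y // κ y = y} :=
    Fintype.card_congr
      ⟨fun y => ⟨l y.1, hκl _ y.2⟩, fun z => ⟨l z.1, hτl _ z.2⟩,
        fun y => Subtype.ext (hll _), fun z => Subtype.ext (hll _)⟩
  have hσρ : Commute σ (κ * τ) := hσκ.mul_right hστ
  set F : {y // τ y = y} → {y // κ y = y} := fun y =>
    ⟨((κ * τ) ^ ((Function.minimalPeriod ⇑(κ * τ) y.1 + 1) / 2)) y.1,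
      kappa_fix_half τ κ hτ hκ y.1 y.2
        (odd_minimalPeriod τ κ l hτ hκ hl hlblk hconj y.1 y.2)⟩ with hF
  have hFinj : Function.Injective F := by
    rintro ⟨y, hy⟩ ⟨z, hz⟩ hFyz
    rw [Subtype.ext_iff] at hFyz ⊢
    simp only [hF] at hFyz
    have hgz : z = (((κ * τ) ^ ((Function.minimalPeriod ⇑(κ * τ) z + 1) / 2))⁻¹ *
        ((κ * τ) ^ ((Function.minimalPeriod ⇑(κ * τ) y + 1) / 2))) y := by
      rw [Perm.mul_apply, hFyz, Perm.inv_def, Equiv.symm_apply_apply]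
    have hgcomm : Commute (((κ * τ) ^ ((Function.minimalPeriod ⇑(κ * τ) z + 1) / 2))⁻¹ *
        ((κ * τ) ^ ((Function.minimalPeriod ⇑(κ * τ) y + 1) / 2))) (κ * τ) :=
      Commute.mul_left ((Commute.refl (κ * τ)).pow_left _).inv_left
        ((Commute.refl (κ * τ)).pow_left _)
    have hnn : Function.minimalPeriod ⇑(κ * τ) z = Function.minimalPeriod ⇑(κ * τ) y := by
      calc Function.minimalPeriod ⇑(κ * τ) z
          = Function.minimalPeriod ⇑(κ * τ) ((((κ * τ) ^
              ((Function.minimalPeriod ⇑(κ * τ) z + 1) / 2))⁻¹ *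
              ((κ * τ) ^ ((Function.minimalPeriod ⇑(κ * τ) y + 1) / 2))) y) := by rw [← hgz]
        _ = Function.minimalPeriod ⇑(κ * τ) y := period_transport _ _ hgcomm y
    rw [hnn] at hFyz
    exact ((κ * τ) ^ ((Function.minimalPeriod ⇑(κ * τ) y + 1) / 2)).injective hFyz
  have hbij : Function.Bijective F :=
    (Fintype.bijective_iff_injective_and_card F).mpr ⟨hFinj, hcards⟩
  apply Equiv.Perm.sign_eq_sign_of_equiv _ _ (Equiv.ofBijective F hbij)
  intro y
  apply Subtype.ext
  show ((κ * τ) ^ ((Function.minimalPeriod ⇑(κ * τ) (σ y.1) + 1) / 2)) (σ y.1)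
      = σ (((κ * τ) ^ ((Function.minimalPeriod ⇑(κ * τ) y.1 + 1) / 2)) y.1)
  rw [period_transport _ σ hσρ y.1]
  have := congrArg (fun π : Perm (Fin N) => π y.1)
    (hσρ.pow_right ((Function.minimalPeriod ⇑(κ * τ) y.1 + 1) / 2)).eq
  simpa using this.symm
end

section
/- For j ≠ k, the representations π_j on V_j and π_k on V_k of Σ_N are disjoint: every Σ_N-equivariant linear map T : V_j → V_k is zero. Here V_j is the complex vector space with basis the set X_j of involutions that are products of j disjoint transpositions, and π_j(σ)(τ) = S(σ,τ)·στσ⁻¹ with S(σ,τ) = (−1)^{#{ {a,b} : a<b, τ(a)=b, σ(a)>σ(b) }}. -/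
open Equiv Finset

/-- The set of involutions of Σ_N that are products of j disjoint transpositions. -/
def InvolJ (N j : ℕ) : Type := {τ : Equiv.Perm (Fin N) // τ * τ = 1 ∧ τ.support.card = 2 * j}

instance (N j : ℕ) : Fintype (InvolJ N j) := by unfold InvolJ; infer_instance
instance (N j : ℕ) : DecidableEq (InvolJ N j) := by unfold InvolJ; infer_instance

/-- Conjugation of an involution of length j by σ. -/
def involConj {N j : ℕ} (σ : Equiv.Perm (Fin N)) (τ : InvolJ N j) : InvolJ N j :=
  ⟨σ * τ.1 * σ⁻¹,
   by rw [show σ * τ.1 * σ⁻¹ * (σ * τ.1 * σ⁻¹) = σ * (τ.1 * τ.1) * σ⁻¹ by group, τ.2.1]; simp,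
   by rw [Equiv.Perm.support_conj]; simp [τ.2.2]⟩

/-- The representation π_j of Σ_N on the free vector space V_j with basis X_j,
given on basis vectors by π_j(σ)(τ) = S(σ,τ)·στσ⁻¹; here V_j is realized as the
space of ℂ-valued functions on X_j, with δ_τ as basis. -/
noncomputable def piRep (N j : ℕ) (σ : Equiv.Perm (Fin N)) :
    (InvolJ N j → ℂ) →ₗ[ℂ] (InvolJ N j → ℂ) where
  toFun f := fun κ => (Ssign σ (involConj σ⁻¹ κ).1 : ℂ) * f (involConj σ⁻¹ κ)
  map_add' := by intro f g; funext κ; simp [mul_add]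
  map_smul' := by intro c f; funext κ; simp; ring

/-- π_j(σ) sends the basis vector δ_τ to S(σ,τ)·δ_{στσ⁻¹}. -/
theorem piRep_single (N j : ℕ) (σ : Equiv.Perm (Fin N)) (τ : InvolJ N j) :
    piRep N j σ (Pi.single τ 1 : InvolJ N j → ℂ) =
      (Ssign σ τ.1 : ℂ) • (Pi.single (involConj σ τ) 1 : InvolJ N j → ℂ) := by
  have key : ∀ κ : InvolJ N j, involConj σ⁻¹ κ = τ ↔ κ = involConj σ τ := by
    intro κ
    constructor <;> intro h
    · rw [← h]; apply Subtype.ext; simp [involConj, mul_assoc]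
    · rw [h]; apply Subtype.ext; simp [involConj, mul_assoc]
  funext κ
  by_cases hκ : κ = involConj σ τ
  · subst hκ
    have h3 : involConj σ⁻¹ (involConj σ τ) = τ := (key _).2 rfl
    simp only [piRep, LinearMap.coe_mk, AddHom.coe_mk, Pi.smul_apply, smul_eq_mul,
      Pi.single_eq_same, mul_one]
    rw [h3, Pi.single_eq_same, mul_one]
  · have h2 : involConj σ⁻¹ κ ≠ τ := fun h => hκ ((key κ).1 h)
    simp [piRep, Pi.single_eq_of_ne hκ, Pi.single_eq_of_ne h2]


section Aux
open Function
variable {N : ℕ}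

/-- For commuting involutions, Ssign counts the τ-edges swapped by σ. -/
lemma ssign_inv (σ τ : Equiv.Perm (Fin N))
    (hσ : σ * σ = 1) (hτ : τ * τ = 1) (hc : σ * τ = τ * σ) :
    Ssign σ τ = (-1) ^ (Finset.univ.filter (fun p : Fin N × Fin N =>
      p.1 < p.2 ∧ τ p.1 = p.2 ∧ σ p.1 = p.2)).card := by
  have hσ2 : ∀ a, σ (σ a) = a := by
    intro a; have := DFunLike.congr_fun hσ a; simpa [Equiv.Perm.mul_apply] using this
  have hτ2 : ∀ a, τ (τ a) = a := by
    intro a; have := DFunLike.congr_fun hτ a; simpa [Equiv.Perm.mul_apply] using this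
  have hcomm : ∀ a, σ (τ a) = τ (σ a) := by
    intro a; have := DFunLike.congr_fun hc a; simpa [Equiv.Perm.mul_apply] using this
  classical
  set D := Finset.univ.filter (fun p : Fin N × Fin N =>
      p.1 < p.2 ∧ τ p.1 = p.2 ∧ σ p.2 < σ p.1) with hD
  set E := Finset.univ.filter (fun p : Fin N × Fin N =>
      p.1 < p.2 ∧ τ p.1 = p.2 ∧ σ p.1 = p.2) with hE
  have hED : E ⊆ D := by
    intro p hp
    simp only [hE, hD, Finset.mem_filter, Finset.mem_univ, true_and] at hp ⊢
    refine ⟨hp.1, hp.2.1, ?_⟩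
    have : σ p.2 = p.1 := by rw [← hp.2.2, hσ2]
    rw [this, hp.2.2]; exact hp.1
  -- involution on D \ E
  have heven : Even (D \ E).card := by
    have h1 : ∏ _p ∈ (D \ E), (-1 : ℤ) = 1 := by
      apply Finset.prod_involution (fun p _ => (σ p.2, σ p.1))
      · intro a _; norm_num
      · intro p hp _
        simp only [Finset.mem_sdiff, hD, hE, Finset.mem_filter, Finset.mem_univ, true_and,
          not_and] at hp
        intro hco
        have h2 : σ p.2 = p.1 := congrArg Prod.fst hco
        have h1' : σ p.1 = p.2 := by rw [← h2, hσ2]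
        exact (hp.2 hp.1.1 hp.1.2.1) h1'
      · intro p hp
        simp only [Finset.mem_sdiff, hD, hE, Finset.mem_filter, Finset.mem_univ, true_and,
          not_and] at hp ⊢
        obtain ⟨⟨h1, h2, h3⟩, h4⟩ := hp
        have hτp2 : τ p.2 = p.1 := by rw [← h2, hτ2]
        constructor
        · refine ⟨h3, ?_, ?_⟩
          · rw [← hcomm, hτp2]
          · rw [hσ2, hσ2]; exact h1
        · intro _ _ hcon
          have : p.2 = σ p.1 := by rw [← hcon, hσ2]
          exact h4 h1 h2 this.symm
      · intro p hp
        simp [hσ2]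
    rw [Finset.prod_const] at h1
    exact (neg_one_pow_eq_one_iff_even (by norm_num)).1 h1
  have hcard : D.card = E.card + (D \ E).card := by
    have h1 := Finset.card_sdiff_of_subset hED
    have h2 := Finset.card_le_card hED
    omega
  obtain ⟨c, hc2⟩ := heven
  rw [Ssign]
  rw [← hD, hcard, hc2, pow_add]
  have : (-1 : ℤ) ^ (c + c) = 1 := by
    rw [← two_mul, pow_mul]; norm_num
  rw [this, mul_one]

/-- pairs-to-points counting -/
lemma card_pairs (σ τ : Equiv.Perm (Fin N)) :
    (Finset.univ.filter (fun p : Fin N × Fin N =>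
      p.1 < p.2 ∧ τ p.1 = p.2 ∧ σ p.1 = p.2)).card =
    (Finset.univ.filter (fun a : Fin N => a < τ a ∧ σ a = τ a)).card := by
  refine Finset.card_bij' (fun p _ => p.1) (fun a _ => (a, τ a)) ?_ ?_ ?_ ?_
  · intro p hp
    simp only [Finset.mem_filter, Finset.mem_univ, true_and] at hp ⊢
    refine ⟨?_, ?_⟩
    · rw [hp.2.1]; exact hp.1
    · rw [hp.2.1]; exact hp.2.2
  · intro a ha
    simp only [Finset.mem_filter, Finset.mem_univ, true_and] at ha ⊢
    exact ha
  · intro p hp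
    simp only [Finset.mem_filter, Finset.mem_univ, true_and] at hp
    exact Prod.ext rfl hp.2.1
  · intro a _; rfl

lemma card_B_zero (σ τ : Equiv.Perm (Fin N))
    (h : ∀ a : Fin N, a < τ a → σ a ≠ τ a) :
    (Finset.univ.filter (fun a : Fin N => a < τ a ∧ σ a = τ a)).card = 0 := by
  rw [Finset.card_eq_zero, Finset.filter_eq_empty_iff]
  intro a _
  rintro ⟨h1, h2⟩
  exact h a h1 h2

lemma card_B_one (σ τ : Equiv.Perm (Fin N)) (p q : Fin N)
    (hpq : p ≠ q) (hτp : τ p = q) (hτq : τ q = p) (hσp : σ p = q) (hσq : σ q = p)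
    (h : ∀ a : Fin N, a < τ a → σ a = τ a → a = p ∨ a = q) :
    (Finset.univ.filter (fun a : Fin N => a < τ a ∧ σ a = τ a)).card = 1 := by
  rw [Finset.card_eq_one]
  rcases hpq.lt_or_gt with hlt | hlt
  · refine ⟨p, ?_⟩
    ext a
    simp only [Finset.mem_filter, Finset.mem_univ, true_and, Finset.mem_singleton]
    constructor
    · rintro ⟨h1, h2⟩
      rcases h a h1 h2 with rfl | rfl
      · rfl
      · rw [hτq] at h1; exact absurd h1 (not_lt.2 hlt.le)
    · rintro rfl
      exact ⟨by rw [hτp]; exact hlt, by rw [hσp, hτp]⟩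
  · refine ⟨q, ?_⟩
    ext a
    simp only [Finset.mem_filter, Finset.mem_univ, true_and, Finset.mem_singleton]
    constructor
    · rintro ⟨h1, h2⟩
      rcases h a h1 h2 with rfl | rfl
      · rw [hτp] at h1; exact absurd h1 (not_lt.2 hlt.le)
      · rfl
    · rintro rfl
      exact ⟨by rw [hτq]; exact hlt, by rw [hσq, hτq]⟩

lemma perm_isPeriodic (f : Equiv.Perm (Fin N)) (x : Fin N) :
    Function.IsPeriodicPt (⇑f) (orderOf f) x := by
  have h : (f ^ (orderOf f)) x = x := by rw [pow_orderOf_eq_one]; rfl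
  exact h

lemma perm_minPeriod_pos (f : Equiv.Perm (Fin N)) (x : Fin N) :
    0 < Function.minimalPeriod (⇑f) x :=
  Function.IsPeriodicPt.minimalPeriod_pos (orderOf_pos f) (perm_isPeriodic f x)

lemma perm_mem_periodicPts (f : Equiv.Perm (Fin N)) (x : Fin N) :
    x ∈ Function.periodicPts (⇑f) :=
  ⟨orderOf f, orderOf_pos f, perm_isPeriodic f x⟩

lemma minPeriod_inv (f : Equiv.Perm (Fin N)) (x : Fin N) :
    Function.minimalPeriod (⇑f⁻¹) x = Function.minimalPeriod (⇑f) x := by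
  have key : ∀ (g : Equiv.Perm (Fin N)) (n : ℕ) (x : Fin N),
      Function.IsPeriodicPt (⇑g) n x → Function.IsPeriodicPt (⇑g⁻¹) n x := by
    intro g n x h
    have h' : (g ^ n) x = x := h
    show (g⁻¹ ^ n) x = x
    rw [inv_pow, Equiv.Perm.inv_eq_iff_eq]
    exact h'.symm
  apply le_antisymm
  · exact Function.IsPeriodicPt.minimalPeriod_le (perm_minPeriod_pos f x)
      (key f _ x (Function.isPeriodicPt_minimalPeriod _ _))
  · have := Function.IsPeriodicPt.minimalPeriod_le (perm_minPeriod_pos f⁻¹ x)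
      (by simpa using key f⁻¹ _ x (Function.isPeriodicPt_minimalPeriod _ _))
    exact this

lemma minPeriod_pow_apply (ρ : Equiv.Perm (Fin N)) (s : ℕ) (x : Fin N) :
    Function.minimalPeriod (⇑ρ) ((ρ ^ s) x) = Function.minimalPeriod (⇑ρ) x := by
  induction s with
  | zero => simp
  | succ n ih =>
    have h : (ρ ^ (n + 1)) x = ρ ((ρ ^ n) x) := by rw [pow_succ']; rfl
    rw [h, Function.minimalPeriod_apply (perm_mem_periodicPts ρ ((ρ ^ n) x)), ih]

lemma conj_pow_fix (ρ g : Equiv.Perm (Fin N)) (h : ∀ y, ρ (g (ρ y)) = g y) :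
    ∀ (t : ℕ) (x : Fin N), (ρ ^ t) (g ((ρ ^ t) x)) = g x := by
  intro t
  induction t with
  | zero => intro x; simp
  | succ n ih =>
    intro x
    have e1 : ∀ y : Fin N, (ρ ^ (n+1)) y = (ρ ^ n) (ρ y) := by
      intro y; rw [pow_succ]; rfl
    have e2 : ∀ y : Fin N, (ρ ^ (n+1)) y = ρ ((ρ ^ n) y) := by
      intro y; rw [pow_succ']; rfl
    rw [e2 x, e1, h]
    exact ih x

lemma exists_even_orbit (τ κ : Equiv.Perm (Fin N)) (hτ : τ * τ = 1) (hκ : κ * κ = 1)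
    (hcard : τ.support.card ≠ κ.support.card) :
    ∃ u : Fin N, (κ u = u ∧ Even (Function.minimalPeriod (⇑(τ * κ)) u)) ∨
      (τ u = u ∧ Even (Function.minimalPeriod (⇑(κ * τ)) u)) := by
  classical
  by_contra hcon
  push_neg at hcon
  set ρ : Equiv.Perm (Fin N) := τ * κ with hρ
  have hτ2 : ∀ a, τ (τ a) = a := fun a => by
    have := DFunLike.congr_fun hτ a; simpa [Equiv.Perm.mul_apply] using this
  have hκ2 : ∀ a, κ (κ a) = a := fun a => by
    have := DFunLike.congr_fun hκ a; simpa [Equiv.Perm.mul_apply] using this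
  have hρinv : κ * τ = ρ⁻¹ := by
    rw [hρ, mul_inv_rev]
    congr 1
    · exact (inv_eq_of_mul_eq_one_right hκ).symm
    · exact (inv_eq_of_mul_eq_one_right hτ).symm
  have hstepτ : ∀ y : Fin N, ρ (τ (ρ y)) = τ y := by
    intro y
    simp only [hρ, Equiv.Perm.mul_apply]
    rw [hτ2, hκ2]
  have hstepκ : ∀ y : Fin N, ρ (κ (ρ y)) = κ y := by
    intro y
    simp only [hρ, Equiv.Perm.mul_apply]
    rw [hκ2, hτ2]
  have hconjτ := conj_pow_fix ρ τ hstepτ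
  have hconjκ := conj_pow_fix ρ κ hstepκ
  -- all fixed points have odd period
  have hoddκ : ∀ u : Fin N, κ u = u → Odd (Function.minimalPeriod (⇑ρ) u) := by
    intro u hu
    exact Nat.not_even_iff_odd.1 ((hcon u).1 hu)
  have hoddτ : ∀ v : Fin N, τ v = v → Odd (Function.minimalPeriod (⇑ρ) v) := by
    intro v hv
    have h := (hcon v).2 hv
    rw [hρinv, minPeriod_inv] at h
    exact Nat.not_even_iff_odd.1 h
  have hperiod : ∀ x : Fin N, (ρ ^ (Function.minimalPeriod (⇑ρ) x)) x = x := by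
    intro x
    exact Function.isPeriodicPt_minimalPeriod (⇑ρ) x
  -- the bijection
  have hbij : (Finset.univ.filter (fun a : Fin N => κ a = a)).card =
      (Finset.univ.filter (fun a : Fin N => τ a = a)).card := by
    refine Finset.card_bij'
      (fun u _ => (ρ ^ ((Function.minimalPeriod (⇑ρ) u + 1) / 2)) u)
      (fun v _ => (ρ ^ ((Function.minimalPeriod (⇑ρ) v - 1) / 2)) v) ?_ ?_ ?_ ?_
    · -- maps to τ-fixed
      intro u hu
      simp only [Finset.mem_filter, Finset.mem_univ, true_and] at hu ⊢
      obtain ⟨s, hs⟩ := hoddκ u hu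
      have hdiv : (Function.minimalPeriod (⇑ρ) u + 1) / 2 = s + 1 := by omega
      rw [hdiv]
      apply (ρ ^ (s + 1)).injective
      rw [hconjτ (s + 1) u]
      have hτu : τ u = ρ u := by
        show τ u = (τ * κ) u
        rw [Equiv.Perm.mul_apply, hu]
      rw [hτu]
      have h1 : (ρ ^ (s + 1)) ((ρ ^ (s + 1)) u) = (ρ ^ (2 * s + 2)) u := by
        rw [← Equiv.Perm.mul_apply, ← pow_add, show (s+1)+(s+1) = 2*s+2 from by omega]
      rw [h1]
      have h2 : (ρ ^ (2 * s + 2)) u = ρ ((ρ ^ (2 * s + 1)) u) := by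
        rw [← Equiv.Perm.mul_apply, ← pow_succ']
      rw [h2, ← hs, hperiod u]
    · -- maps to κ-fixed
      intro v hv
      simp only [Finset.mem_filter, Finset.mem_univ, true_and] at hv ⊢
      obtain ⟨s, hs⟩ := hoddτ v hv
      have hdiv : (Function.minimalPeriod (⇑ρ) v - 1) / 2 = s := by omega
      rw [hdiv]
      apply (ρ ^ s).injective
      rw [hconjκ s v]
      have h1 : (ρ ^ s) ((ρ ^ s) v) = (ρ ^ (2 * s)) v := by
        rw [← Equiv.Perm.mul_apply, ← pow_add, show s+s = 2*s from by omega]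
      rw [h1]
      -- κ v = ρ^{2s} v  since ρ (κ v) = v = ρ^{2s+1} v
      apply ρ.injective
      have h2 : ρ (κ v) = v := by
        show (τ * κ) (κ v) = v
        rw [Equiv.Perm.mul_apply, hκ2, hv]
      rw [h2]
      have h3 : ρ ((ρ ^ (2 * s)) v) = (ρ ^ (2 * s + 1)) v := by
        rw [← Equiv.Perm.mul_apply, ← pow_succ']
      rw [h3, ← hs, hperiod v]
    · -- left inverse
      intro u hu
      simp only [Finset.mem_filter, Finset.mem_univ, true_and] at hu
      obtain ⟨s, hs⟩ := hoddκ u hu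
      have hdiv : (Function.minimalPeriod (⇑ρ) u + 1) / 2 = s + 1 := by omega
      beta_reduce
      rw [hdiv]
      have hp2 : Function.minimalPeriod (⇑ρ) ((ρ ^ (s+1)) u) = 2 * s + 1 := by
        rw [minPeriod_pow_apply]; exact hs
      rw [hp2, show (2*s+1-1)/2 = s from by omega, ← Equiv.Perm.mul_apply, ← pow_add,
        show s + (s+1) = 2*s+1 from by omega, ← hs, hperiod u]
    · -- right inverse
      intro v hv
      simp only [Finset.mem_filter, Finset.mem_univ, true_and] at hv
      obtain ⟨s, hs⟩ := hoddτ v hv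
      have hdiv : (Function.minimalPeriod (⇑ρ) v - 1) / 2 = s := by omega
      beta_reduce
      rw [hdiv]
      have hp2 : Function.minimalPeriod (⇑ρ) ((ρ ^ s) v) = 2 * s + 1 := by
        rw [minPeriod_pow_apply]; exact hs
      rw [hp2, show (2*s+1+1)/2 = s+1 from by omega, ← Equiv.Perm.mul_apply, ← pow_add,
        show (s+1) + s = 2*s+1 from by omega, ← hs, hperiod v]
  -- contradiction with support cardinalities
  apply hcard
  have h1 := Finset.card_filter_add_card_filter_not
    (s := (Finset.univ : Finset (Fin N))) (p := fun a => τ a = a)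
  have h2 := Finset.card_filter_add_card_filter_not
    (s := (Finset.univ : Finset (Fin N))) (p := fun a => κ a = a)
  have hsτ : τ.support = Finset.univ.filter (fun a => ¬ τ a = a) := by
    ext a; simp [Equiv.Perm.mem_support]
  have hsκ : κ.support = Finset.univ.filter (fun a => ¬ κ a = a) := by
    ext a; simp [Equiv.Perm.mem_support]
  rw [hsτ, hsκ]
  simp only [Finset.card_univ, Fintype.card_fin] at h1 h2
  omega

lemma exists_sigma (τ κ : Equiv.Perm (Fin N)) (hτ : τ * τ = 1) (hκ : κ * κ = 1)
    (u : Fin N) (hu : κ u = u) (m : ℕ) (hm : 1 ≤ m)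
    (hT : Function.minimalPeriod (⇑(τ * κ)) u = 2 * m) :
    ∃ σ : Equiv.Perm (Fin N), σ * τ = τ * σ ∧ σ * κ = κ * σ ∧
      Ssign σ τ * Ssign σ κ = -1 := by
  classical
  set ρ : Equiv.Perm (Fin N) := τ * κ with hρ
  have hτ2 : ∀ a, τ (τ a) = a := fun a => by
    have := DFunLike.congr_fun hτ a; simpa [Equiv.Perm.mul_apply] using this
  have hκ2 : ∀ a, κ (κ a) = a := fun a => by
    have := DFunLike.congr_fun hκ a; simpa [Equiv.Perm.mul_apply] using this
  set w : ℕ → Fin N := fun t => (ρ ^ t) u with hw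
  have hwdef : ∀ t, w t = (ρ ^ t) u := fun _ => rfl
  have hiter : ∀ (n : ℕ) (x : Fin N), (ρ ^ n) x = (⇑ρ)^[n] x := fun n x => rfl
  have hwadd : ∀ a b, (ρ ^ a) (w b) = w (a + b) := by
    intro a b
    rw [hwdef, hwdef, ← Equiv.Perm.mul_apply, ← pow_add]
  have hper : w (2 * m) = u := by
    rw [hwdef, hiter, ← hT]; exact Function.iterate_minimalPeriod
  have hwp : ∀ a, w (a + 2 * m) = w a := by
    intro a
    have h1 : (ρ ^ a) (w (2 * m)) = w (a + 2 * m) := hwadd a (2 * m)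
    rw [hper] at h1
    rw [← h1, hwdef]
  have hwmod : ∀ a, w a = w (a % (2 * m)) := by
    intro a
    conv_lhs => rw [← Nat.div_add_mod a (2 * m)]
    generalize a / (2 * m) = q
    induction q with
    | zero => simp
    | succ n ih =>
      have h2 : 2 * m * (n + 1) + a % (2 * m) = (2 * m * n + a % (2 * m)) + 2 * m := by ring
      rw [h2, hwp, ih]
  have hmod : ∀ a b, w a = w b → a % (2 * m) = b % (2 * m) := by
    have key : ∀ a b, a ≤ b → w a = w b → a % (2 * m) = b % (2 * m) := by
      intro a b hab he
      have h1 : (ρ ^ a) (w (b - a)) = (ρ ^ a) (w 0) := by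
        rw [hwadd, hwadd]
        have h2 : a + (b - a) = b := by omega
        rw [h2]
        simpa using he.symm
      have h2 : w (b - a) = w 0 := (ρ ^ a).injective h1
      have h3 : Function.IsPeriodicPt (⇑ρ) (b - a) u := by
        have h4 : (ρ ^ (b - a)) u = u := by
          rw [← hwdef]; simpa [hwdef] using h2
        rw [hiter] at h4
        exact h4
      have h4 : 2 * m ∣ b - a := by
        rw [← hT]; exact Function.IsPeriodicPt.minimalPeriod_dvd h3
      exact (Nat.modEq_iff_dvd' hab).2 h4
    intro a b he
    rcases le_total a b with h | h
    · exact key a b h he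
    · exact (key b a h he.symm).symm
  have hwlt : ∀ a b, a < 2 * m → b < 2 * m → w a = w b → a = b := by
    intro a b ha hb he
    have := hmod a b he
    rwa [Nat.mod_eq_of_lt ha, Nat.mod_eq_of_lt hb] at this
  -- conjugation identities
  have hstepτ : ∀ y : Fin N, ρ (τ (ρ y)) = τ y := by
    intro y
    simp only [hρ, Equiv.Perm.mul_apply]
    rw [hτ2, hκ2]
  have hstepκ : ∀ y : Fin N, ρ (κ (ρ y)) = κ y := by
    intro y
    simp only [hρ, Equiv.Perm.mul_apply]
    rw [hκ2, hτ2]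
  have hconjτ : ∀ t (x : Fin N), (ρ ^ t) (τ ((ρ ^ t) x)) = τ x := by
    intro t
    induction t with
    | zero => intro x; simp
    | succ n ih =>
      intro x
      have e1 : ∀ y : Fin N, (ρ ^ (n+1)) y = (ρ ^ n) (ρ y) := by
        intro y; rw [pow_succ]; rfl
      have e2 : ∀ y : Fin N, (ρ ^ (n+1)) y = ρ ((ρ ^ n) y) := by
        intro y; rw [pow_succ']; rfl
      rw [e2 x, e1, hstepτ]
      exact ih x
  have hconjκ : ∀ t (x : Fin N), (ρ ^ t) (κ ((ρ ^ t) x)) = κ x := by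
    intro t
    induction t with
    | zero => intro x; simp
    | succ n ih =>
      intro x
      have e1 : ∀ y : Fin N, (ρ ^ (n+1)) y = (ρ ^ n) (ρ y) := by
        intro y; rw [pow_succ]; rfl
      have e2 : ∀ y : Fin N, (ρ ^ (n+1)) y = ρ ((ρ ^ n) y) := by
        intro y; rw [pow_succ']; rfl
      rw [e2 x, e1, hstepκ]
      exact ih x
  have hτu : τ u = w 1 := by
    rw [hwdef]
    simp only [hρ, pow_one, Equiv.Perm.mul_apply, hu]
  -- action of τ and κ on w
  have hτw : ∀ t, t ≤ 4 * m → τ (w t) = w (4 * m + 1 - t) := by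
    intro t ht
    apply (ρ ^ t).injective
    have h1 : (ρ ^ t) (τ (w t)) = τ u := by rw [hwdef]; exact hconjτ t u
    rw [h1, hwadd]
    have h2 : t + (4 * m + 1 - t) = (1 + 2 * m) + 2 * m := by omega
    rw [h2, hwp, hwp, hτu]
  have hκw : ∀ t, t ≤ 4 * m → κ (w t) = w (4 * m - t) := by
    intro t ht
    apply (ρ ^ t).injective
    have h1 : (ρ ^ t) (κ (w t)) = κ u := by rw [hwdef]; exact hconjκ t u
    rw [h1, hwadd]
    have h2 : t + (4 * m - t) = (0 + 2 * m) + 2 * m := by omega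
    rw [h2, hwp, hwp, hu]
    simp [hwdef]
  -- same cycle
  have hwsc : ∀ t, Equiv.Perm.SameCycle ρ u (w t) := by
    intro t
    exact ⟨(t : ℤ), by rw [zpow_natCast, ← hwdef]⟩
  have hsc_ex : ∀ x, Equiv.Perm.SameCycle ρ u x → ∃ t, t < 2 * m ∧ w t = x := by
    intro x hx
    obtain ⟨i, _, _, hi⟩ := Equiv.Perm.SameCycle.exists_pow_eq ρ hx
    refine ⟨i % (2 * m), Nat.mod_lt _ (by omega), ?_⟩
    rw [← hwmod, hwdef]
    exact hi
  -- sigma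
  set c : Equiv.Perm (Fin N) := ρ.cycleOf u with hc
  set σ : Equiv.Perm (Fin N) := c ^ m with hσdef
  have hcw : ∀ t, c (w t) = w (t + 1) := by
    intro t
    rw [hc, Equiv.Perm.cycleOf_apply, if_pos (hwsc t)]
    have : ρ (w t) = w (1 + t) := hwadd 1 t
    rw [this, Nat.add_comm]
  have hcfix : ∀ x, ¬ Equiv.Perm.SameCycle ρ u x → c x = x := by
    intro x hx
    rw [hc, Equiv.Perm.cycleOf_apply, if_neg hx]
  have hσw : ∀ t, σ (w t) = w (t + m) := by
    have key : ∀ i t, (c ^ i) (w t) = w (t + i) := by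
      intro i
      induction i with
      | zero => intro t; simp
      | succ n ih =>
        intro t
        rw [pow_succ', Equiv.Perm.mul_apply, ih, hcw]
        have e3 : t + n + 1 = t + (n + 1) := by omega
        rw [e3]
    intro t; exact key m t
  have hσfix : ∀ x, ¬ Equiv.Perm.SameCycle ρ u x → σ x = x := by
    have key : ∀ i x, ¬ Equiv.Perm.SameCycle ρ u x → (c ^ i) x = x := by
      intro i
      induction i with
      | zero => intro x _; simp
      | succ n ih =>
        intro x hx
        rw [pow_succ, Equiv.Perm.mul_apply, hcfix x hx, ih x hx]
    intro x; exact key m x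
  -- τ, κ preserve non-cycle points
  have hτnc : ∀ x, ¬ Equiv.Perm.SameCycle ρ u x → ¬ Equiv.Perm.SameCycle ρ u (τ x) := by
    intro x hx hsc
    obtain ⟨t, ht, hw'⟩ := hsc_ex _ hsc
    have : x = τ (w t) := by rw [hw', hτ2]
    rw [hτw t (by omega)] at this
    exact hx (this ▸ hwsc _)
  have hκnc : ∀ x, ¬ Equiv.Perm.SameCycle ρ u x → ¬ Equiv.Perm.SameCycle ρ u (κ x) := by
    intro x hx hsc
    obtain ⟨t, ht, hw'⟩ := hsc_ex _ hsc
    have : x = κ (w t) := by rw [hw', hκ2]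
    rw [hκw t (by omega)] at this
    exact hx (this ▸ hwsc _)
  -- commutation and involution
  have hσσ : σ * σ = 1 := by
    ext x
    simp only [Equiv.Perm.mul_apply, Equiv.Perm.one_apply, Equiv.Perm.coe_one, id_eq]
    by_cases hx : Equiv.Perm.SameCycle ρ u x
    · obtain ⟨t, ht, rfl⟩ := hsc_ex x hx
      rw [hσw, hσw]
      have : t + m + m = t + 2 * m := by ring
      rw [this, hwp]
    · rw [hσfix x hx, hσfix x hx]
  have hστ : σ * τ = τ * σ := by
    ext x
    simp only [Equiv.Perm.mul_apply]
    by_cases hx : Equiv.Perm.SameCycle ρ u x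
    · obtain ⟨t, ht, rfl⟩ := hsc_ex x hx
      rw [hτw t (by omega), hσw, hσw, hτw (t + m) (by omega)]
      have h2 : 4 * m + 1 - t + m = (4 * m + 1 - (t + m)) + 2 * m := by omega
      rw [h2, hwp]
    · rw [hσfix x hx, hσfix (τ x) (hτnc x hx)]
  have hσκ : σ * κ = κ * σ := by
    ext x
    simp only [Equiv.Perm.mul_apply]
    by_cases hx : Equiv.Perm.SameCycle ρ u x
    · obtain ⟨t, ht, rfl⟩ := hsc_ex x hx
      rw [hκw t (by omega), hσw, hσw, hκw (t + m) (by omega)]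
      have h2 : 4 * m - t + m = (4 * m - (t + m)) + 2 * m := by omega
      rw [h2, hwp]
    · rw [hσfix x hx, hσfix (κ x) (hκnc x hx)]
  refine ⟨σ, hστ, hσκ, ?_⟩
  -- sign computation
  rw [ssign_inv σ τ hσσ hτ hστ, ssign_inv σ κ hσσ hκ hσκ, card_pairs, card_pairs,
    ← pow_add]
  -- key dvd facts
  have hdvdτ : ∀ a : Fin N, a < τ a → σ a = τ a →
      ∃ t, t < 2 * m ∧ w t = a ∧ (2 * m : ℤ) ∣ (3 * m + 1 - 2 * t : ℤ) := by
    intro a h1 h2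
    have hsc : Equiv.Perm.SameCycle ρ u a := by
      by_contra hns
      rw [hσfix a hns] at h2
      exact absurd h2 (ne_of_lt h1)
    obtain ⟨t, ht, rfl⟩ := hsc_ex a hsc
    refine ⟨t, ht, rfl, ?_⟩
    have he : w (t + m) = w (4 * m + 1 - t) := by
      rw [← hσw, ← hτw t (by omega), h2]
    have hmm := hmod _ _ he
    have hd : (2 * m : ℤ) ∣ ((4 * m + 1 - t : ℕ) : ℤ) - ((t + m : ℕ) : ℤ) :=
      Nat.ModEq.dvd hmm
    have hcast : ((4 * m + 1 - t : ℕ) : ℤ) = 4 * m + 1 - t := by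
      have : t ≤ 4 * m + 1 := by omega
      omega
    rw [hcast] at hd
    have : ((t + m : ℕ) : ℤ) = t + m := by push_cast; ring
    rw [this] at hd
    convert hd using 1
    push_cast
    ring
  have hdvdκ : ∀ a : Fin N, a < κ a → σ a = κ a →
      ∃ t, t < 2 * m ∧ w t = a ∧ (2 * m : ℤ) ∣ (3 * m - 2 * t : ℤ) := by
    intro a h1 h2
    have hsc : Equiv.Perm.SameCycle ρ u a := by
      by_contra hns
      rw [hσfix a hns] at h2
      exact absurd h2 (ne_of_lt h1)
    obtain ⟨t, ht, rfl⟩ := hsc_ex a hsc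
    refine ⟨t, ht, rfl, ?_⟩
    have he : w (t + m) = w (4 * m - t) := by
      rw [← hσw, ← hκw t (by omega), h2]
    have hmm := hmod _ _ he
    have hd : (2 * m : ℤ) ∣ ((4 * m - t : ℕ) : ℤ) - ((t + m : ℕ) : ℤ) :=
      Nat.ModEq.dvd hmm
    have hcast : ((4 * m - t : ℕ) : ℤ) = 4 * m - t := by
      have : t ≤ 4 * m := by omega
      omega
    rw [hcast] at hd
    have : ((t + m : ℕ) : ℤ) = t + m := by push_cast; ring
    rw [this] at hd
    convert hd using 1
    push_cast
    ring
  rcases Nat.even_or_odd m with ⟨r, hr⟩ | ⟨r, hr⟩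
  · -- m even : Bτ empty, Bκ has one element
    have hr1 : 1 ≤ r := by omega
    have hBτ : (Finset.univ.filter (fun a : Fin N => a < τ a ∧ σ a = τ a)).card = 0 := by
      apply card_B_zero
      intro a h1 h2
      obtain ⟨t, ht, _, hd⟩ := hdvdτ a h1 h2
      obtain ⟨k, hk⟩ := hd
      have : Even (3 * (m : ℤ) + 1 - 2 * t) := by
        rw [hk]; exact ⟨m * k, by ring⟩
      obtain ⟨c', hc'⟩ := this
      omega
    have hBκ : (Finset.univ.filter (fun a : Fin N => a < κ a ∧ σ a = κ a)).card = 1 := by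
      set p : Fin N := w r with hp
      set q : Fin N := w (3 * r) with hq
      have hpq : p ≠ q := by
        intro h
        have := hwlt r (3 * r) (by omega) (by omega) h
        omega
      have hκp : κ p = q := by
        rw [hp, hκw r (by omega), hq]
        have h2 : 4 * m - r = 3 * r + 2 * m := by omega
        rw [h2, hwp]
      have hκq : κ q = p := by rw [← hκp, hκ2]
      have hσp : σ p = q := by
        rw [hp, hσw, hq]
        congr 1
        omega
      have hσq : σ q = p := by
        rw [hq, hσw, hp]
        have h2 : 3 * r + m = r + 2 * m := by omega
        rw [h2, hwp]
      apply card_B_one σ κ p q hpq hκp hκq hσp hσq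
      intro a h1 h2
      obtain ⟨t, ht, hwt, hd⟩ := hdvdκ a h1 h2
      obtain ⟨k, hk⟩ := hd
      -- 3m - 2t = 2mk, m = 2r : 3r - t = 2rk
      have hk' : (3 * (r : ℤ) - t) = 2 * r * k := by
        have hm2 : (m : ℤ) = 2 * r := by omega
        rw [hm2] at hk
        linarith
      have hkcases : k = 0 ∨ k = 1 := by
        rcases lt_trichotomy k 0 with h | h | h
        · exfalso
          have : 2 * (r : ℤ) * k ≤ 2 * r * (-1) := by
            apply mul_le_mul_of_nonneg_left (by omega) (by positivity)
          omega
        · left; exact h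
        · rcases eq_or_lt_of_le (Int.add_one_le_iff.mpr h) with h' | h'
          · right; exact h'.symm
          · exfalso
            have : 2 * (r : ℤ) * 2 ≤ 2 * r * k := by
              apply mul_le_mul_of_nonneg_left (by omega) (by positivity)
            omega
      rcases hkcases with rfl | rfl
      · right
        rw [← hwt, hq]
        congr 1
        omega
      · left
        rw [← hwt, hp]
        congr 1
        omega
    rw [hBτ, hBκ]
    norm_num
  · -- m odd : Bκ empty, Bτ has one element
    have hBκ : (Finset.univ.filter (fun a : Fin N => a < κ a ∧ σ a = κ a)).card = 0 := by
      apply card_B_zero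
      intro a h1 h2
      obtain ⟨t, ht, _, hd⟩ := hdvdκ a h1 h2
      obtain ⟨k, hk⟩ := hd
      have : Even (3 * (m : ℤ) - 2 * t) := by
        rw [hk]; exact ⟨m * k, by ring⟩
      obtain ⟨c', hc'⟩ := this
      omega
    have hBτ : (Finset.univ.filter (fun a : Fin N => a < τ a ∧ σ a = τ a)).card = 1 := by
      rcases Nat.eq_zero_or_pos r with hr0 | hr1
      · -- r = 0, m = 1
        subst hr0
        have hpq : w 0 ≠ w 1 := by
          intro h
          have h2 := hwlt 0 1 (by omega) (by omega) h
          omega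
        have hτp : τ (w 0) = w 1 := by
          rw [hτw 0 (by omega)]
          have h2 : 4 * m + 1 - 0 = (1 + 2 * m) + 2 * m := by omega
          rw [h2, hwp, hwp]
        have hτq : τ (w 1) = w 0 := by rw [← hτp, hτ2]
        have hσp : σ (w 0) = w 1 := by
          rw [hσw]
          congr 1
          omega
        have hσq : σ (w 1) = w 0 := by
          rw [hσw]
          have h2 : 1 + m = 0 + 2 * m := by omega
          rw [h2, hwp]
        apply card_B_one σ τ (w 0) (w 1) hpq hτp hτq hσp hσq
        intro a h1 h2
        obtain ⟨t, ht, hwt, _⟩ := hdvdτ a h1 h2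
        have : t = 0 ∨ t = 1 := by omega
        rcases this with rfl | rfl
        · left; exact hwt.symm
        · right; exact hwt.symm
      · have hpq : w (r + 1) ≠ w (3 * r + 2) := by
          intro h
          have h2 := hwlt (r + 1) (3 * r + 2) (by omega) (by omega) h
          omega
        have hτp : τ (w (r + 1)) = w (3 * r + 2) := by
          rw [hτw (r + 1) (by omega)]
          have h2 : 4 * m + 1 - (r + 1) = (3 * r + 2) + 2 * m := by omega
          rw [h2, hwp]
        have hτq : τ (w (3 * r + 2)) = w (r + 1) := by rw [← hτp, hτ2]
        have hσp : σ (w (r + 1)) = w (3 * r + 2) := by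
          rw [hσw]
          congr 1
          omega
        have hσq : σ (w (3 * r + 2)) = w (r + 1) := by
          rw [hσw]
          have h2 : 3 * r + 2 + m = (r + 1) + 2 * m := by omega
          rw [h2, hwp]
        apply card_B_one σ τ (w (r + 1)) (w (3 * r + 2)) hpq hτp hτq hσp hσq
        intro a h1 h2
        obtain ⟨t, ht, hwt, hd⟩ := hdvdτ a h1 h2
        obtain ⟨k, hk⟩ := hd
        have hk' : (3 * (r : ℤ) + 2 - t) = (2 * r + 1) * k := by
          have hm' : (m : ℤ) = 2 * r + 1 := by omega
          rw [hm'] at hk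
          linarith
        have hkcases : k = 0 ∨ k = 1 := by
          rcases lt_trichotomy k 0 with h | h | h
          · exfalso
            have hle : (2 * (r : ℤ) + 1) * k ≤ (2 * r + 1) * (-1) := by
              apply mul_le_mul_of_nonneg_left (by omega) (by positivity)
            omega
          · left; exact h
          · rcases eq_or_lt_of_le (Int.add_one_le_iff.mpr h) with h' | h'
            · right; exact h'.symm
            · exfalso
              have hle : (2 * (r : ℤ) + 1) * 2 ≤ (2 * r + 1) * k := by
                apply mul_le_mul_of_nonneg_left (by omega) (by positivity)
              omega
        rcases hkcases with rfl | rfl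
        · right
          rw [← hwt]
          congr 1
          omega
        · left
          rw [← hwt]
          congr 1
          omega
    rw [hBτ, hBκ]
    norm_num

end Aux

/-- For j ≠ k the representations π_j and π_k are disjoint: every
Σ_N-equivariant linear map T : V_j → V_k is zero. -/
theorem equivariant_map_eq_zero {N j k : ℕ} (hjk : j ≠ k)
    (T : (InvolJ N j → ℂ) →ₗ[ℂ] (InvolJ N k → ℂ))
    (hT : ∀ σ : Equiv.Perm (Fin N), T ∘ₗ piRep N j σ = piRep N k σ ∘ₗ T) :
    T = 0 := by
  classical
  have entry : ∀ (τ : InvolJ N j) (κ : InvolJ N k), T (Pi.single τ 1) κ = 0 := by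
    intro τ κ
    have hsupp : τ.1.support.card ≠ κ.1.support.card := by
      rw [τ.2.2, κ.2.2]; omega
    obtain ⟨u, hu⟩ := exists_even_orbit τ.1 κ.1 τ.2.1 κ.2.1 hsupp
    have hσex : ∃ σ : Equiv.Perm (Fin N), σ * τ.1 = τ.1 * σ ∧ σ * κ.1 = κ.1 * σ ∧
        Ssign σ τ.1 * Ssign σ κ.1 = -1 := by
      rcases hu with ⟨huκ, heven⟩ | ⟨huτ, heven⟩
      · obtain ⟨m, hm⟩ := heven
        have hpos := perm_minPeriod_pos (τ.1 * κ.1) u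
        exact exists_sigma τ.1 κ.1 τ.2.1 κ.2.1 u huκ m (by omega) (by omega)
      · obtain ⟨m, hm⟩ := heven
        have hpos := perm_minPeriod_pos (κ.1 * τ.1) u
        obtain ⟨σ, h1, h2, h3⟩ := exists_sigma κ.1 τ.1 κ.2.1 τ.2.1 u huτ m (by omega) (by omega)
        exact ⟨σ, h2, h1, by rw [mul_comm] at h3; exact h3⟩
    obtain ⟨σ, hc1, hc2, hsign⟩ := hσex
    have hconjτ : involConj σ τ = τ := by
      apply Subtype.ext
      show σ * τ.1 * σ⁻¹ = τ.1
      rw [hc1, mul_assoc, mul_inv_cancel, mul_one]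
    have hconjκ : involConj σ⁻¹ κ = κ := by
      apply Subtype.ext
      show σ⁻¹ * κ.1 * σ⁻¹⁻¹ = κ.1
      rw [inv_inv, mul_assoc, ← hc2, ← mul_assoc, inv_mul_cancel, one_mul]
    have heq := congrFun (congrArg (fun (S : (InvolJ N j → ℂ) →ₗ[ℂ] (InvolJ N k → ℂ)) =>
      (S (Pi.single τ 1) : InvolJ N k → ℂ)) (hT σ)) κ
    simp only [LinearMap.comp_apply] at heq
    rw [piRep_single, hconjτ, map_smul] at heq
    have hrhs : (piRep N k σ) (T (Pi.single τ 1)) κ =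
        (Ssign σ κ.1 : ℂ) * T (Pi.single τ 1) κ := by
      show (Ssign σ (involConj σ⁻¹ κ).1 : ℂ) * T (Pi.single τ 1) (involConj σ⁻¹ κ) = _
      rw [hconjκ]
    rw [hrhs] at heq
    have hlhs : ((Ssign σ τ.1 : ℂ) • T (Pi.single τ 1)) κ =
        (Ssign σ τ.1 : ℂ) * T (Pi.single τ 1) κ := rfl
    rw [hlhs] at heq
    have hne : (Ssign σ τ.1 : ℤ) ≠ Ssign σ κ.1 := by
      intro h
      rw [h] at hsign
      have h2 := mul_self_nonneg (Ssign σ κ.1)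
      omega
    have hneC : (Ssign σ τ.1 : ℂ) ≠ (Ssign σ κ.1 : ℂ) := by
      exact_mod_cast hne
    have hzero : ((Ssign σ τ.1 : ℂ) - (Ssign σ κ.1 : ℂ)) * T (Pi.single τ 1) κ = 0 := by
      rw [sub_mul, heq, sub_self]
    rcases mul_eq_zero.1 hzero with h | h
    · exact absurd (sub_eq_zero.1 h) hneC
    · exact h
  apply LinearMap.ext
  intro f
  have hf : f = ∑ τ : InvolJ N j, f τ • (Pi.single τ 1 : InvolJ N j → ℂ) := by
    funext x
    rw [Finset.sum_apply]
    simp [Pi.single_apply]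
  have hz : ∀ τ : InvolJ N j, T (Pi.single τ 1) = 0 := by
    intro τ; funext κ; exact entry τ κ
  rw [hf, map_sum]
  simp [hz]
end
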